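/- arXiv:1111.0575 — 4 statements merged into one kernel-verified Lean document; each statement's English description precedes it below -/
import Mathlib

section
/- For every Young diagram λ with n boxes, (n+1)·f^λ = Σ_{ν : λ ↗ ν} f^ν, where the sum is over all Young diagrams ν with n+1 boxes obtained from λ by adding one box, and f^λ denotes the number of standard Young tableaux of shape λ. -/
structure SYT (μ : YoungDiagram) where
  entry : ℕ → ℕ → ℕ
  mem_iff : ∀ i j, (i, j) ∈ μ ↔ 1 ≤ entry i j
  le_card : ∀ i j, entry i j ≤ μ.card
  injOn : ∀ i j i' j', (i, j) ∈ μ → (i', j') ∈ μ → entry i j = entry i' j' →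
    (i, j) = (i', j')
  row_lt : ∀ i j, (i, j + 1) ∈ μ → entry i j < entry i (j + 1)
  col_lt : ∀ i j, (i + 1, j) ∈ μ → entry i j < entry (i + 1) j

/-- The number of standard Young tableaux of shape `μ`. -/
noncomputable def fSYT (μ : YoungDiagram) : ℕ := Nat.card (SYT μ)

/-- `ν` is obtained from `μ` by adding a single box (`μ ↗ ν`). -/
def YDcovers (μ ν : YoungDiagram) : Prop := μ.cells ⊆ ν.cells ∧ ν.card = μ.card + 1

/-!
Deleting the box that holds `n` gives `f^λ = ∑_{ρ ⋖ λ} f^ρ` for `λ ≠ ∅`. Apply this to every `ν`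
with `λ ⋖ ν`: the term `f^λ` appears once per upper cover of `λ`, and the other terms, indexed by
`λ ⋖ ν`, `μ ⋖ ν`, `μ ≠ λ`, match the pairs `ρ ⋖ λ`, `ρ ⋖ μ`, `μ ≠ λ` through `ν = λ ⊔ μ` and
`ρ = λ ⊓ μ`, since Young's lattice is distributive. By induction on `n`,
`∑_{μ : ρ ⋖ μ} f^μ = n f^ρ` for each `ρ ⋖ λ`, hence `∑_{ν : λ ⋖ ν} f^ν = (u - d + n) f^λ` where
`u` and `d` count the upper and lower covers of `λ`; and `u = d + 1`, because outer and inner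
corners alternate along the boundary of `λ`.
-/

open Finset

section ModularLattice

variable {α : Type*} [Lattice α] [IsModularLattice α] [DecidableEq α]

/-- In a modular lattice two distinct lower covers of `b` have join `b` and a meet covered by both;
dually for upper covers. -/
theorem sum_sum_erase_covBy_comm {M : Type*} [AddCommMonoid M] (U D : α → Finset α)
    (hU : ∀ a b, b ∈ U a ↔ a ⋖ b) (hD : ∀ a b, b ∈ D a ↔ b ⋖ a) (f : α → M) (a : α) :
    ∑ b ∈ U a, ∑ c ∈ (D b).erase a, f c = ∑ b ∈ D a, ∑ c ∈ (U b).erase a, f c := by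
  rw [sum_sigma', sum_sigma']
  refine sum_nbij' (fun p => ⟨a ⊓ p.2, p.2⟩) (fun p => ⟨a ⊔ p.2, p.2⟩) ?_ ?_ ?_ ?_
    (fun _ _ => rfl)
  all_goals
    rintro ⟨b, c⟩ hbc
    simp only [mem_sigma, mem_erase, hU, hD] at hbc ⊢
  · obtain ⟨hab, hca, hcb⟩ := hbc
    obtain rfl := hab.wcovBy.sup_eq hcb.wcovBy (Ne.symm hca)
    exact ⟨inf_covBy_of_covBy_sup_right hcb, hca, inf_covBy_of_covBy_sup_left hab⟩
  · obtain ⟨hba, hca, hbc⟩ := hbc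
    obtain rfl := hba.wcovBy.inf_eq hbc.wcovBy (Ne.symm hca)
    exact ⟨covBy_sup_of_inf_covBy_right hbc, hca, covBy_sup_of_inf_covBy_left hba⟩
  · rw [hbc.1.wcovBy.sup_eq hbc.2.2.wcovBy (Ne.symm hbc.2.1)]
  · rw [hbc.1.wcovBy.inf_eq hbc.2.2.wcovBy (Ne.symm hbc.2.1)]

theorem sum_covBy_eq_rank_succ_mul (U D : α → Finset α)
    (hU : ∀ a b, b ∈ U a ↔ a ⋖ b) (hD : ∀ a b, b ∈ D a ↔ b ⋖ a)
    (r : α → ℕ) (hr : ∀ a b, a ⋖ b → r b = r a + 1) (hUD : ∀ a, #(U a) = #(D a) + 1)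
    (f : α → ℕ) (hf : ∀ a, 0 < r a → f a = ∑ b ∈ D a, f b) (a : α) :
    ∑ b ∈ U a, f b = (r a + 1) * f a := by
  induction hn : r a using Nat.strong_induction_on generalizing a with
  | _ n ih =>
  have hup : ∑ b ∈ U a, f b = #(U a) * f a + ∑ b ∈ U a, ∑ c ∈ (D b).erase a, f c := by
    rw [← smul_eq_mul, ← sum_const, ← sum_add_distrib]
    refine sum_congr rfl fun b hb => ?_
    have hab := (hU a b).1 hb
    rw [hf b (by rw [hr a b hab]; omega), add_sum_erase _ _ ((hD b a).2 hab)]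
  have hdown : ∀ ρ ∈ D a, f a + ∑ c ∈ (U ρ).erase a, f c = r a * f ρ := by
    intro ρ hρ
    have hρa := (hD a ρ).1 hρ
    rw [add_sum_erase _ _ ((hU ρ a).2 hρa), ih (r ρ) (by rw [← hn, hr ρ a hρa]; omega) ρ rfl,
      hr ρ a hρa]
  have hdown_sum : #(D a) * f a + ∑ ρ ∈ D a, ∑ c ∈ (U ρ).erase a, f c = r a * f a := by
    rw [← smul_eq_mul, ← sum_const, ← sum_add_distrib, sum_congr rfl hdown, ← mul_sum]
    rcases Nat.eq_zero_or_pos (r a) with h0 | hpos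
    · simp [h0]
    · rw [← hf a hpos]
  rw [hup, sum_sum_erase_covBy_comm U D hU hD, hUD, ← hn]
  linarith

end ModularLattice

namespace YoungDiagram

variable {μ ν : YoungDiagram} {c d e : ℕ × ℕ}

theorem card_strictMono : StrictMono YoungDiagram.card :=
  fun _ _ h => Finset.card_lt_card (cells_ssubset_iff.2 h)

def IsAddable (μ : YoungDiagram) (c : ℕ × ℕ) : Prop := c ∉ μ ∧ ∀ d < c, d ∈ μ

def IsRemovable (μ : YoungDiagram) (c : ℕ × ℕ) : Prop := c ∈ μ ∧ ∀ d, c < d → d ∉ μ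

/-- The smallest diagram containing `μ` and the cell `c`; it is `μ` with `c` added when `c` is
addable. -/
def addCell (μ : YoungDiagram) (c : ℕ × ℕ) : YoungDiagram where
  cells := μ.cells ∪ Iic c
  isLowerSet := by
    rw [coe_union, coe_Iic]
    exact μ.isLowerSet.union (isLowerSet_Iic c)

/-- The largest diagram inside `μ` avoiding the cell `c`; it is `μ` with `c` removed when `c` is
removable. -/
def removeCell (μ : YoungDiagram) (c : ℕ × ℕ) : YoungDiagram where
  cells := μ.cells.filter (¬ c ≤ ·)
  isLowerSet := by
    rw [coe_filter]
    exact μ.isLowerSet.inter (isUpperSet_Ici c).compl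

theorem IsAddable.cells_addCell (hc : μ.IsAddable c) : (μ.addCell c).cells = insert c μ.cells := by
  ext d
  simp only [addCell, mem_union, mem_Iic, mem_insert, mem_cells]
  constructor
  · rintro (hd | hd)
    · exact Or.inr hd
    · exact hd.eq_or_lt.imp id (hc.2 d)
  · rintro (rfl | hd)
    exacts [Or.inr le_rfl, Or.inl hd]

theorem IsRemovable.mem_removeCell (hc : μ.IsRemovable c) :
    d ∈ μ.removeCell c ↔ d ∈ μ ∧ d ≠ c := by
  change d ∈ μ.cells.filter _ ↔ _
  rw [mem_filter, mem_cells]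
  refine and_congr_right fun hd => ⟨fun h hdc => h hdc.ge, fun hdc hcd => ?_⟩
  exact hc.2 d (hcd.lt_of_ne (Ne.symm hdc)) hd

theorem IsRemovable.ne_of_lt (hc : μ.IsRemovable c) (hde : d < e) (he : e ∈ μ) : d ≠ c := by
  rintro rfl
  exact hc.2 e hde he

theorem IsRemovable.cells_removeCell (hc : μ.IsRemovable c) :
    (μ.removeCell c).cells = μ.cells.erase c := by
  ext d
  rw [mem_cells, hc.mem_removeCell, mem_erase, mem_cells, and_comm]

theorem IsAddable.card_addCell (hc : μ.IsAddable c) : (μ.addCell c).card = μ.card + 1 := by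
  rw [YoungDiagram.card, hc.cells_addCell, card_insert_of_notMem hc.1]

theorem IsRemovable.card_removeCell (hc : μ.IsRemovable c) :
    (μ.removeCell c).card + 1 = μ.card := by
  rw [YoungDiagram.card, hc.cells_removeCell, card_erase_add_one hc.1]

theorem le_addCell (μ : YoungDiagram) (c : ℕ × ℕ) : μ ≤ μ.addCell c :=
  cells_subset_iff.1 subset_union_left

theorem removeCell_le (μ : YoungDiagram) (c : ℕ × ℕ) : μ.removeCell c ≤ μ :=
  cells_subset_iff.1 (filter_subset _ _)

theorem covBy_of_le_of_card_eq (hle : μ ≤ ν) (hcard : ν.card = μ.card + 1) : μ ⋖ ν :=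
  ⟨hle.lt_of_ne (by rintro rfl; omega), fun _ h₁ h₂ => by
    have := card_strictMono h₁; have := card_strictMono h₂; omega⟩

theorem IsAddable.covBy_addCell (hc : μ.IsAddable c) : μ ⋖ μ.addCell c :=
  covBy_of_le_of_card_eq (le_addCell μ c) hc.card_addCell

theorem IsRemovable.removeCell_covBy (hc : μ.IsRemovable c) : μ.removeCell c ⋖ μ :=
  covBy_of_le_of_card_eq (removeCell_le μ c) hc.card_removeCell.symm

theorem exists_isAddable_of_lt (h : μ < ν) : ∃ c ∈ ν, μ.IsAddable c := by
  obtain ⟨c, hc⟩ := Finset.exists_minimal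
    (sdiff_nonempty.2 (not_subset_of_ssubset (cells_ssubset_iff.2 h)))
  simp only [mem_sdiff, mem_cells] at hc
  refine ⟨c, hc.1.1, hc.1.2, fun d hdc => ?_⟩
  by_contra hd
  exact hdc.not_ge (hc.2 ⟨ν.isLowerSet hdc.le hc.1.1, hd⟩ hdc.le)

theorem exists_isRemovable_of_lt (h : μ < ν) : ∃ c ∉ μ, ν.IsRemovable c := by
  obtain ⟨c, hc⟩ := Finset.exists_maximal
    (sdiff_nonempty.2 (not_subset_of_ssubset (cells_ssubset_iff.2 h)))
  simp only [mem_sdiff, mem_cells] at hc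
  refine ⟨c, hc.1.2, hc.1.1, fun d hcd hd => ?_⟩
  exact hcd.not_ge (hc.2 ⟨hd, fun hdμ => hc.1.2 (μ.isLowerSet hcd.le hdμ)⟩ hcd.le)

theorem exists_eq_addCell_of_covBy (h : μ ⋖ ν) : ∃ c, μ.IsAddable c ∧ ν = μ.addCell c := by
  obtain ⟨c, hcν, hc⟩ := exists_isAddable_of_lt h.lt
  refine ⟨c, hc, (h.eq_or_eq (le_addCell μ c) ?_).resolve_left hc.covBy_addCell.ne' |>.symm⟩
  rw [← cells_subset_iff, hc.cells_addCell]
  exact insert_subset hcν (cells_subset_iff.2 h.le)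

theorem exists_eq_removeCell_of_covBy (h : μ ⋖ ν) : ∃ c, ν.IsRemovable c ∧ μ = ν.removeCell c := by
  obtain ⟨c, hcμ, hc⟩ := exists_isRemovable_of_lt h.lt
  refine ⟨c, hc, (h.eq_or_eq ?_ (removeCell_le ν c)).resolve_right hc.removeCell_covBy.ne |>.symm⟩
  intro d hd
  exact hc.mem_removeCell.2 ⟨h.le hd, by rintro rfl; exact hcμ hd⟩

theorem card_eq_of_covBy (h : μ ⋖ ν) : ν.card = μ.card + 1 := by
  obtain ⟨c, hc, rfl⟩ := exists_eq_addCell_of_covBy h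
  exact hc.card_addCell

theorem ydCovers_iff_covBy : YDcovers μ ν ↔ μ ⋖ ν :=
  ⟨fun h => covBy_of_le_of_card_eq (cells_subset_iff.1 h.1) h.2,
    fun h => ⟨cells_subset_iff.2 h.le, card_eq_of_covBy h⟩⟩

theorem isAddable_iff {i j : ℕ} :
    μ.IsAddable (i, j) ↔ j = μ.rowLen i ∧ (i = 0 ∨ μ.rowLen i < μ.rowLen (i - 1)) := by
  simp only [IsAddable, Prod.forall, Prod.mk_lt_mk, mem_iff_lt_rowLen, not_lt]
  constructor
  · rintro ⟨hj, hlt⟩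
    have hleft : 0 < j → j - 1 < μ.rowLen i := fun _ => hlt i (j - 1) (Or.inr ⟨le_rfl, by omega⟩)
    have hup : 0 < i → j < μ.rowLen (i - 1) := fun _ => hlt (i - 1) j (Or.inl ⟨by omega, le_rfl⟩)
    omega
  · rintro ⟨rfl, hi⟩
    refine ⟨le_rfl, fun a b hab => ?_⟩
    rcases hab with ⟨ha, hb⟩ | ⟨ha, hb⟩
    · have := μ.rowLen_anti a (i - 1) (by omega)
      omega
    · have := μ.rowLen_anti a i ha
      omega

theorem isRemovable_iff {i j : ℕ} :
    μ.IsRemovable (i, j) ↔ j + 1 = μ.rowLen i ∧ μ.rowLen (i + 1) < μ.rowLen i := by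
  simp only [IsRemovable, Prod.forall, Prod.mk_lt_mk, mem_iff_lt_rowLen, not_lt]
  constructor
  · rintro ⟨hj, hgt⟩
    have hright := hgt i (j + 1) (Or.inr ⟨le_rfl, by omega⟩)
    have hdown := hgt (i + 1) j (Or.inl ⟨by omega, le_rfl⟩)
    omega
  · rintro ⟨hj, hi⟩
    refine ⟨by omega, fun a b hab => ?_⟩
    rcases hab with ⟨ha, hb⟩ | ⟨ha, hb⟩
    · have := μ.rowLen_anti (i + 1) a ha
      omega
    · have := μ.rowLen_anti i a ha
      omega

open scoped Classical in
noncomputable def addableCells (μ : YoungDiagram) : Finset (ℕ × ℕ) :=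
  (range (μ.colLen 0 + 1) ×ˢ range (μ.rowLen 0 + 1)).filter μ.IsAddable

open scoped Classical in
noncomputable def removableCells (μ : YoungDiagram) : Finset (ℕ × ℕ) :=
  μ.cells.filter μ.IsRemovable

theorem mem_addableCells : c ∈ μ.addableCells ↔ μ.IsAddable c := by
  classical
  obtain ⟨i, j⟩ := c
  rw [addableCells, mem_filter, and_iff_right_iff_imp, mem_product, mem_range, mem_range]
  intro hc
  obtain ⟨rfl, hi⟩ := isAddable_iff.1 hc
  have hrow := μ.rowLen_anti 0 i i.zero_le
  have hcol : i = 0 ∨ (i - 1, 0) ∈ μ := hi.imp_right fun h => mem_iff_lt_rowLen.2 (by omega)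
  rw [mem_iff_lt_colLen] at hcol
  omega

theorem mem_removableCells : c ∈ μ.removableCells ↔ μ.IsRemovable c := by
  classical
  rw [removableCells, mem_filter, mem_cells, and_iff_right_iff_imp]
  exact And.left

/-- Outer corners sit at the ends of row `0` and of each row just below an inner corner. -/
theorem card_addableCells (μ : YoungDiagram) :
    #μ.addableCells = #μ.removableCells + 1 := by
  have h0 : ((0, μ.rowLen 0) : ℕ × ℕ) ∈ μ.addableCells :=
    mem_addableCells.2 (isAddable_iff.2 ⟨rfl, Or.inl rfl⟩)
  rw [← card_erase_add_one h0]
  congr 1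
  refine card_nbij' (fun c => (c.1 - 1, μ.rowLen (c.1 - 1) - 1))
    (fun c => (c.1 + 1, μ.rowLen (c.1 + 1))) ?_ ?_ ?_ ?_
  all_goals
    rintro ⟨i, j⟩ hc
    simp only [coe_erase, Set.mem_sdiff, Set.mem_singleton_iff, mem_coe, mem_addableCells,
      mem_removableCells, isAddable_iff, isRemovable_iff, Prod.mk.injEq] at hc ⊢
  all_goals rcases i with _ | i <;> simp at hc ⊢ <;> omega

open scoped Classical in
noncomputable def upperCovers (μ : YoungDiagram) : Finset YoungDiagram :=
  μ.addableCells.image μ.addCell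

open scoped Classical in
noncomputable def lowerCovers (μ : YoungDiagram) : Finset YoungDiagram :=
  μ.removableCells.image μ.removeCell

theorem mem_upperCovers : ν ∈ μ.upperCovers ↔ μ ⋖ ν := by
  classical
  simp only [upperCovers, mem_image, mem_addableCells]
  constructor
  · rintro ⟨c, hc, rfl⟩
    exact hc.covBy_addCell
  · intro h
    obtain ⟨c, hc, rfl⟩ := exists_eq_addCell_of_covBy h
    exact ⟨c, hc, rfl⟩

theorem mem_lowerCovers : ν ∈ μ.lowerCovers ↔ ν ⋖ μ := by
  classical
  simp only [lowerCovers, mem_image, mem_removableCells]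
  constructor
  · rintro ⟨c, hc, rfl⟩
    exact hc.removeCell_covBy
  · intro h
    obtain ⟨c, hc, rfl⟩ := exists_eq_removeCell_of_covBy h
    exact ⟨c, hc, rfl⟩

theorem injOn_addCell (μ : YoungDiagram) : Set.InjOn μ.addCell {c | μ.IsAddable c} := by
  intro c hc d hd h
  have hmem : c ∈ (μ.addCell d).cells := by
    rw [← h, hc.cells_addCell]
    exact mem_insert_self c _
  rw [hd.cells_addCell, mem_insert] at hmem
  exact hmem.resolve_right hc.1

theorem injOn_removeCell (μ : YoungDiagram) : Set.InjOn μ.removeCell {c | μ.IsRemovable c} := by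
  intro c hc d hd h
  by_contra hcd
  have hmem : c ∈ μ.removeCell d := hd.mem_removeCell.2 ⟨hc.1, hcd⟩
  rw [← h, hc.mem_removeCell] at hmem
  exact hmem.2 rfl

theorem card_upperCovers (μ : YoungDiagram) : #μ.upperCovers = #μ.lowerCovers + 1 := by
  classical
  rw [upperCovers, lowerCovers, card_image_of_injOn, card_image_of_injOn, card_addableCells]
  · exact μ.injOn_removeCell.mono fun c hc => mem_removableCells.1 hc
  · exact μ.injOn_addCell.mono fun c hc => mem_addableCells.1 hc

end YoungDiagram

namespace SYT

variable {μ : YoungDiagram} {c : ℕ × ℕ}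

@[ext]
theorem ext {T S : SYT μ} (h : T.entry = S.entry) : T = S := by
  cases T
  cases S
  simpa using h

theorem entry_eq_zero (T : SYT μ) {i j : ℕ} (h : (i, j) ∉ μ) : T.entry i j = 0 :=
  Nat.eq_zero_of_not_pos fun hp => h ((T.mem_iff i j).2 hp)

theorem eq_of_entry_eq (T : SYT μ) {d : ℕ × ℕ} (hc : c ∈ μ)
    (h : T.entry d.1 d.2 = T.entry c.1 c.2) : d = c := by
  by_cases hd : d ∈ μ
  · exact T.injOn d.1 d.2 c.1 c.2 hd hc h
  · have := (T.mem_iff c.1 c.2).1 hc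
    rw [← h, T.entry_eq_zero hd] at this
    omega

instance : Finite (SYT μ) :=
  Finite.of_injective
    (fun T (d : μ.cells) => (⟨T.entry d.1.1 d.1.2, Nat.lt_succ_of_le (T.le_card _ _)⟩ :
      Fin (μ.card + 1)))
    fun T S h => by
      ext i j
      by_cases hm : (i, j) ∈ μ
      · simpa using congrArg Fin.val (congrFun h ⟨(i, j), hm⟩)
      · rw [T.entry_eq_zero hm, S.entry_eq_zero hm]

/-- The entries are injective on the `μ.card` cells and land in `[1, μ.card]`, so they fill it. -/
theorem exists_entry_eq_card (T : SYT μ) (h : 0 < μ.card) :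
    ∃ c ∈ μ, T.entry c.1 c.2 = μ.card := by
  have himage : μ.cells.image (fun d => T.entry d.1 d.2) = Icc 1 μ.card := by
    refine eq_of_subset_of_card_le (fun k hk => ?_) ?_
    · obtain ⟨d, hd, rfl⟩ := mem_image.1 hk
      exact mem_Icc.2 ⟨(T.mem_iff d.1 d.2).1 hd, T.le_card _ _⟩
    · rw [card_image_of_injOn fun d _ e he h => T.eq_of_entry_eq he h, Nat.card_Icc,
        Nat.add_sub_cancel]
  obtain ⟨c, hc, hcard⟩ := mem_image.1 (himage ▸ mem_Icc.2 ⟨h, le_rfl⟩)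
  exact ⟨c, hc, hcard⟩

theorem isRemovable_of_entry_eq_card (T : SYT μ) (hc : c ∈ μ)
    (hT : T.entry c.1 c.2 = μ.card) : μ.IsRemovable c := by
  obtain ⟨i, j⟩ := c
  dsimp only at hT
  have hright : (i, j + 1) ∉ μ := fun h => by
    have := T.row_lt i j h; have := T.le_card i (j + 1); omega
  have hdown : (i + 1, j) ∉ μ := fun h => by
    have := T.col_lt i j h; have := T.le_card (i + 1) j; omega
  rw [YoungDiagram.mem_iff_lt_rowLen] at hc hright hdown
  exact YoungDiagram.isRemovable_iff.2 ⟨by omega, by omega⟩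

noncomputable def removeMax (hc : μ.IsRemovable c) (T : SYT μ) (hT : T.entry c.1 c.2 = μ.card) :
    SYT (μ.removeCell c) where
  entry i j := if (i, j) = c then 0 else T.entry i j
  mem_iff i j := by
    rw [hc.mem_removeCell]
    split_ifs with h
    · simp [h]
    · simp [h, T.mem_iff]
  le_card i j := by
    have hcard := hc.card_removeCell
    split_ifs with h
    · exact Nat.zero_le _
    · have hne : T.entry i j ≠ μ.card := fun he =>
        h (T.eq_of_entry_eq (d := (i, j)) hc.1 (he.trans hT.symm))
      have := T.le_card i j
      omega
  injOn i j i' j' hm hm' he := by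
    rw [hc.mem_removeCell] at hm hm'
    simp only [if_neg hm.2, if_neg hm'.2] at he
    exact T.injOn i j i' j' hm.1 hm'.1 he
  row_lt i j hm := by
    rw [hc.mem_removeCell] at hm
    have hij := hc.ne_of_lt (Prod.mk_lt_mk_iff_right.2 j.lt_succ_self) hm.1
    simp only [if_neg hij, if_neg hm.2]
    exact T.row_lt i j hm.1
  col_lt i j hm := by
    rw [hc.mem_removeCell] at hm
    have hij := hc.ne_of_lt (Prod.mk_lt_mk_iff_left.2 i.lt_succ_self) hm.1
    simp only [if_neg hij, if_neg hm.2]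
    exact T.col_lt i j hm.1

noncomputable def addMax (hc : μ.IsRemovable c) (S : SYT (μ.removeCell c)) : SYT μ where
  entry i j := if (i, j) = c then μ.card else S.entry i j
  mem_iff i j := by
    have hcard := hc.card_removeCell
    split_ifs with h
    · rw [h]
      exact iff_of_true hc.1 (by omega)
    · rw [← S.mem_iff, hc.mem_removeCell, and_iff_left h]
  le_card i j := by
    have hcard := hc.card_removeCell
    have := S.le_card i j
    split_ifs <;> omega
  injOn i j i' j' hm hm' he := by
    have hcard := hc.card_removeCell
    have := S.le_card i j
    have := S.le_card i' j'
    split_ifs at he with h h' h'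
    · exact h.trans h'.symm
    · omega
    · omega
    · exact S.injOn i j i' j' (hc.mem_removeCell.2 ⟨hm, h⟩) (hc.mem_removeCell.2 ⟨hm', h'⟩) he
  row_lt i j hm := by
    have hcard := hc.card_removeCell
    have hij := hc.ne_of_lt (Prod.mk_lt_mk_iff_right.2 j.lt_succ_self) hm
    have := S.le_card i j
    simp only [if_neg hij]
    split_ifs with h
    · omega
    · exact S.row_lt i j (hc.mem_removeCell.2 ⟨hm, h⟩)
  col_lt i j hm := by
    have hcard := hc.card_removeCell
    have hij := hc.ne_of_lt (Prod.mk_lt_mk_iff_left.2 i.lt_succ_self) hm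
    have := S.le_card i j
    simp only [if_neg hij]
    split_ifs with h
    · omega
    · exact S.col_lt i j (hc.mem_removeCell.2 ⟨hm, h⟩)

noncomputable def equivRemoveCell (hc : μ.IsRemovable c) :
    {T : SYT μ // T.entry c.1 c.2 = μ.card} ≃ SYT (μ.removeCell c) where
  toFun T := removeMax hc T.1 T.2
  invFun S := ⟨addMax hc S, by simp [addMax]⟩
  left_inv := by
    rintro ⟨T, hT⟩
    ext i j
    simp only [addMax, removeMax]
    split_ifs with h
    · subst h
      exact hT.symm
    · rfl
  right_inv S := by
    ext i j
    simp only [addMax, removeMax]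
    split_ifs with h
    · subst h
      exact (S.entry_eq_zero fun h' => (hc.mem_removeCell.1 h').2 rfl).symm
    · rfl

theorem card_eq_sum_card_removeCell (h : 0 < μ.card) :
    Nat.card (SYT μ) = ∑ c ∈ μ.removableCells, Nat.card (SYT (μ.removeCell c)) := by
  classical
  have := Fintype.ofFinite (SYT μ)
  choose maxCell hmaxCell using fun T : SYT μ => T.exists_entry_eq_card h
  have hmaps : Set.MapsTo maxCell (univ : Finset (SYT μ)) μ.removableCells := fun T _ =>
    YoungDiagram.mem_removableCells.2 (T.isRemovable_of_entry_eq_card (hmaxCell T).1 (hmaxCell T).2)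
  rw [Nat.card_eq_fintype_card, ← card_univ, card_eq_sum_card_fiberwise hmaps]
  refine sum_congr rfl fun c hc => ?_
  rw [YoungDiagram.mem_removableCells] at hc
  rw [← Nat.card_congr (equivRemoveCell hc), ← Fintype.card_subtype, ← Nat.card_eq_fintype_card]
  exact Nat.card_congr (Equiv.subtypeEquivRight fun T =>
    ⟨fun hT => hT ▸ (hmaxCell T).2,
      fun hT => T.eq_of_entry_eq hc.1 ((hmaxCell T).2.trans hT.symm)⟩)

end SYT

theorem fSYT_eq_sum_lowerCovers {μ : YoungDiagram} (h : 0 < μ.card) :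
    fSYT μ = ∑ ν ∈ μ.lowerCovers, fSYT ν := by
  classical
  rw [YoungDiagram.lowerCovers, sum_image (μ.injOn_removeCell.mono fun _ hc =>
    YoungDiagram.mem_removableCells.1 hc)]
  exact SYT.card_eq_sum_card_removeCell h

/-- $(n+1) f^λ = Σ_{ν : λ ↗ ν} f^ν$. -/
theorem sum_fSYT_covers (lam : YoungDiagram) :
    (lam.card + 1) * fSYT lam = ∑ᶠ (ν : YoungDiagram) (_ : YDcovers lam ν), fSYT ν := by
  classical
  simp_rw [YoungDiagram.ydCovers_iff_covBy, ← YoungDiagram.mem_upperCovers,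
    finsum_mem_finset_eq_sum]
  exact (sum_covBy_eq_rank_succ_mul YoungDiagram.upperCovers YoungDiagram.lowerCovers
    (fun _ _ => YoungDiagram.mem_upperCovers) (fun _ _ => YoungDiagram.mem_lowerCovers)
    YoungDiagram.card (fun _ _ => YoungDiagram.card_eq_of_covBy) YoungDiagram.card_upperCovers
    fSYT (fun _ => fSYT_eq_sum_lowerCovers) lam).symm
end

section
/- Let a = (a₁,...,a_l) be a sequence of distinct reals and let b < b' be reals distinct from the aᵢ. Denote by Rec(s) the position of the last box added by Robinson–Schensted insertion of the sequence s, and define (x₁,y₁) ⪯ (x₂,y₂) iff x₁ ≤ x₂ and y₁ ≥ y₂. Then: (a) Rec(a b) ≺ Rec(a b b'); (b) Rec(a b') ≻ Rec(a b' b); (c) Rec(a b) ⪯ Rec(a b'); (d) Rec(a b') ⪯ Rec(a b b'). -/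
/-- Robinson–Schensted row insertion of `x` into a row: replace the leftmost
entry larger than `x`, which gets bumped, or append `x` at the end. -/
noncomputable def rowInsert (x : ℝ) : List ℝ → List ℝ × Option ℝ
  | [] => ([x], none)
  | y :: ys =>
    if x < y then (x :: ys, some y)
    else
      let p := rowInsert x ys
      (y :: p.1, p.2)

/-- Insertion of `x` into the rows `i, i+1, …` of the tableau `T` (given as its
list of rows), with fuel; returns the new tableau and the `(row, column)`
position of the newly created box. -/
noncomputable def insertTab : ℕ → (ℕ → List ℝ) → ℕ → ℝ → (ℕ → List ℝ) × ℕ × ℕ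
  | 0, T, i, _ => (T, i, 0)
  | fuel + 1, T, i, x =>
    match rowInsert x (T i) with
    | (r, none) => (Function.update T i r, i, (T i).length)
    | (r, some y) => insertTab fuel (Function.update T i r) (i + 1) y

/-- Robinson–Schensted insertion of a whole sequence, returning the insertion
tableau (as its list of rows) together with the list of the positions of the
boxes added at the successive insertion steps. -/
noncomputable def RSsteps (xs : List ℝ) : (ℕ → List ℝ) × List (ℕ × ℕ) :=
  xs.foldl
    (fun acc x =>
      let r := insertTab (xs.length + 1) acc.1 0 x
      (r.1, acc.2 ++ [r.2]))
    (fun _ => [], [])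

/-- The `(row, column)` position of the box added by the last insertion step. -/
noncomputable def RecPos (xs : List ℝ) : ℕ × ℕ := ((RSsteps xs).2).getLastD (0, 0)

/-- The Robinson–Schensted shape of a sequence, as the function of row lengths. -/
noncomputable def RSshape (xs : List ℝ) : ℕ → ℕ := fun i => ((RSsteps xs).1 i).length

/-- The recording tableau of a sequence: the entry at `(row i, column j)` is the
number of the insertion step at which this box was added (`0` if it is never added). -/
noncomputable def RecTab (xs : List ℝ) : ℕ → ℕ → ℕ := fun i j =>
  if (i, j) ∈ (RSsteps xs).2 then (RSsteps xs).2.idxOf (i, j) + 1 else 0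

/-- The partial order `⪯` on boxes: positions are `(row, column)`, and
`(x₁,y₁) ⪯ (x₂,y₂)` iff `x₁ ≤ x₂` and `y₁ ≥ y₂` in `(column, row)`-coordinates. -/
def pOrd (p q : ℕ × ℕ) : Prop := p.2 ≤ q.2 ∧ q.1 ≤ p.1

/-!
Every insertion ends by appending a box at the end of some row `r`, and insertion preserves
the tableau conditions, so the shape stays a partition. Hence each of the four comparisons of
boxes reduces to a comparison of the rows in which the insertions end. These are proved by
induction along the bumping paths (the row bumping lemma): in each row, the entries bumped by
the two insertions compare as the inserted entries do, and each is inserted into the next row.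
-/

lemma List.findIdx_set_of_eq {α : Type*} {p : α → Bool} {l : List α} {i : ℕ}
    (hi : i < l.length) {a : α} (h : p a = p l[i]) : (l.set i a).findIdx p = l.findIdx p := by
  have hmap : (l.set i a).map p = l.map p := by
    rw [List.map_set, h, ← List.getElem_map (f := p) (h := by simpa using hi),
      List.set_getElem_self]
  calc (l.set i a).findIdx p = ((l.set i a).map p).findIdx id := by rw [List.findIdx_map]; rfl
    _ = l.findIdx p := by rw [hmap, List.findIdx_map]; rfl

lemma List.getElem_notMem_set {α : Type*} {l : List α} (hl : l.Nodup) {i : ℕ}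
    (hi : i < l.length) {a : α} (ha : a ≠ l[i]) : l[i] ∉ l.set i a := by
  intro hmem
  obtain ⟨k, hk, he⟩ := List.getElem_of_mem hmem
  rw [List.getElem_set] at he
  split_ifs at he with hik
  · exact ha he
  · exact hik ((hl.getElem_inj_iff).1 he).symm

lemma rowInsert_eq (x : ℝ) (R : List ℝ) :
    rowInsert x R = if h : R.findIdx (x < ·) < R.length
      then (R.set (R.findIdx (x < ·)) x, some R[R.findIdx (x < ·)])
      else (R ++ [x], none) := by
  induction R with
  | nil => simp [rowInsert]
  | cons y ys ih =>
    by_cases hxy : x < y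
    · simp [rowInsert, hxy, List.findIdx_cons]
    · rw [rowInsert, if_neg hxy, ih]
      simp only [List.findIdx_cons, hxy, decide_false, cond_false, List.length_cons,
        Nat.add_lt_add_iff_right]
      split_ifs <;> simp

section Row

variable {α : Type*} [LinearOrder α] {x x' : α} {R : List α}

lemma getElem_le_of_lt_findIdx {k : ℕ} (hk : k < R.findIdx (x < ·)) :
    R[k]'(hk.trans_le List.findIdx_le_length) ≤ x := by
  simpa using List.not_of_lt_findIdx hk

lemma lt_getElem_findIdx (h : R.findIdx (x < ·) < R.length) : x < R[R.findIdx (x < ·)] := by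
  simpa using List.findIdx_getElem (w := h)

lemma le_of_not_findIdx_lt_length (h : ¬ R.findIdx (x < ·) < R.length) :
    ∀ r ∈ R, r ≤ x := by
  simpa [List.findIdx_eq_length] using le_antisymm List.findIdx_le_length (not_lt.1 h)

lemma findIdx_le_of_lt_getElem {c : ℕ} (hc : c < R.length) (hx : x < R[c]) :
    R.findIdx (x < ·) ≤ c := by
  by_contra h
  simpa [hx] using List.not_of_lt_findIdx (not_le.1 h)

lemma findIdx_le_findIdx_of_le (hxx' : x ≤ x') : R.findIdx (x < ·) ≤ R.findIdx (x' < ·) :=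
  List.findIdx_le_findIdx fun r _ hr => by
    simp only [decide_eq_true_eq] at hr ⊢; exact hxx'.trans_lt hr

lemma findIdx_lt_findIdx_set (h : R.findIdx (x < ·) < R.length) (hxx' : x ≤ x') :
    R.findIdx (x < ·) < (R.set (R.findIdx (x < ·)) x).findIdx (x' < ·) := by
  refine List.lt_findIdx_of_not (by simpa using h) fun k hk => ?_
  simp only [List.getElem_set, decide_eq_true_eq, not_lt]
  split_ifs
  · exact hxx'
  · exact (getElem_le_of_lt_findIdx (by omega)).trans hxx'

lemma not_findIdx_lt_length_append (h : ¬ R.findIdx (x < ·) < R.length) (hxx' : x ≤ x') :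
    ¬ (R ++ [x]).findIdx (x' < ·) < (R ++ [x]).length := by
  simp only [List.findIdx_lt_length, List.mem_append, List.mem_singleton, decide_eq_true_eq,
    not_exists, not_and, not_lt]
  rintro r (hr | rfl)
  · exact (le_of_not_findIdx_lt_length h r hr).trans hxx'
  · exact hxx'

lemma sortedLT_set_findIdx (hR : R.SortedLT) (hx : x ∉ R) (h : R.findIdx (x < ·) < R.length) :
    (R.set (R.findIdx (x < ·)) x).SortedLT := by
  refine List.sortedLT_of_getElem_lt_getElem_of_lt fun i j hi hj hij => ?_
  simp only [List.length_set] at hi hj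
  simp only [List.getElem_set]
  split_ifs
  · omega
  · exact (lt_getElem_findIdx h).trans (hR.getElem_lt_getElem_of_lt (by omega))
  · exact (getElem_le_of_lt_findIdx (by omega)).lt_of_ne fun he => hx (he ▸ List.getElem_mem _)
  · exact hR.getElem_lt_getElem_of_lt hij

lemma sortedLT_append_of_not_findIdx_lt (hR : R.SortedLT) (hx : x ∉ R)
    (h : ¬ R.findIdx (x < ·) < R.length) : (R ++ [x]).SortedLT := by
  refine (List.pairwise_append.2 ⟨hR.pairwise, List.pairwise_singleton _ _, ?_⟩).sortedLT
  intro r hr _ hy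
  rw [List.mem_singleton.1 hy]
  exact (le_of_not_findIdx_lt_length h r hr).lt_of_ne fun he => hx (he ▸ hr)

end Row

def RowBelow (R S : List ℝ) : Prop :=
  S.length ≤ R.length ∧ ∀ k (hR : k < R.length) (hS : k < S.length), R[k] < S[k]

lemma RowBelow.append {R S : List ℝ} (h : RowBelow R S) (x : ℝ) : RowBelow (R ++ [x]) S :=
  ⟨by have := h.1; simp only [List.length_append, List.length_singleton]; omega, fun k _ hS => by
    simpa [List.getElem_append_left (hS.trans_le h.1)] using h.2 k (hS.trans_le h.1) hS⟩

lemma RowBelow.set_rowInsert {x : ℝ} {R S : List ℝ} (hR : R.SortedLT) (hRS : RowBelow R S)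
    (h : R.findIdx (x < ·) < R.length) :
    RowBelow (R.set (R.findIdx (x < ·)) x) (rowInsert R[R.findIdx (x < ·)] S).1 := by
  set c := R.findIdx (x < ·)
  set y := R[c]
  have hxy : x < y := lt_getElem_findIdx h
  have hlt : ∀ k (hk : k < c), R[k] < y := fun k hk => hR.getElem_lt_getElem_of_lt hk
  have hc1 : S.findIdx (y < ·) ≤ c := by
    by_cases hcS : c < S.length
    · exact findIdx_le_of_lt_getElem hcS (hRS.2 c h hcS)
    · exact List.findIdx_le_length.trans (by omega)
  rw [rowInsert_eq]
  split_ifs with hS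
  · refine ⟨by simpa using hRS.1, fun k hkR hkS => ?_⟩
    simp only [List.length_set] at hkR hkS
    simp only [List.getElem_set]
    split_ifs with h1
    · exact hxy
    · subst h1; exact hxy.trans (hRS.2 _ h _)
    · exact hlt k (by omega)
    · exact hRS.2 k hkR hkS
  · have hSc : S.length ≤ c := by
      have := List.findIdx_le_length (xs := S) (p := (y < ·)); omega
    refine ⟨by simp; omega, fun k hkR hkS => ?_⟩
    simp only [List.length_set, List.length_append, List.length_singleton] at hkR hkS
    simp only [List.getElem_set, List.getElem_append, List.getElem_singleton]
    split_ifs with h1 h2 h2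
    · omega
    · exact hxy
    · exact hRS.2 k hkR h2
    · exact hlt k (by omega)

def tailRows (T : ℕ → List ℝ) : ℕ → List ℝ := fun j => T (j + 1)

def consRows (R : List ℝ) (T : ℕ → List ℝ) : ℕ → List ℝ
  | 0 => R
  | j + 1 => T j

section Rows

variable {T : ℕ → List ℝ} {R : List ℝ}

@[simp] lemma tailRows_apply (j : ℕ) : tailRows T j = T (j + 1) := rfl

@[simp] lemma consRows_zero : consRows R T 0 = R := rfl

@[simp] lemma consRows_succ (j : ℕ) : consRows R T (j + 1) = T j := rfl

@[simp] lemma tailRows_consRows : tailRows (consRows R T) = T := rfl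

@[simp] lemma consRows_tailRows : consRows (T 0) (tailRows T) = T := by
  funext j; cases j <;> rfl

@[simp] lemma tailRows_update_zero : tailRows (Function.update T 0 R) = tailRows T := by
  funext j; simp

lemma tailRows_update (i : ℕ) :
    tailRows (Function.update T (i + 1) R) = Function.update (tailRows T) i R := by
  funext j; simp [Function.update_apply]

end Rows

/-- Insertion from row `i + 1` on only sees `tailRows T`; this lets every induction on the fuel
run along row `0`. -/
lemma insertTab_add_one (F : ℕ) (T : ℕ → List ℝ) (i : ℕ) (x : ℝ) :
    insertTab F T (i + 1) x =
      Prod.map (consRows (T 0)) (Prod.map (· + 1) id) (insertTab F (tailRows T) i x) := by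
  induction F generalizing T i x with
  | zero => simp [insertTab]
  | succ F ih =>
    rw [insertTab, insertTab, tailRows_apply]
    rcases rowInsert x (T (i + 1)) with ⟨r, _ | y⟩
    · refine Prod.ext ?_ rfl
      funext j; cases j <;> simp [Function.update_apply]
    · simp only [ih, tailRows_update, Function.update_apply]
      simp

section Unfold

variable (F : ℕ) {T : ℕ → List ℝ} {x : ℝ}

lemma insertTab_succ_of_lt (h : (T 0).findIdx (x < ·) < (T 0).length) :
    insertTab (F + 1) T 0 x =
      Prod.map (consRows ((T 0).set ((T 0).findIdx (x < ·)) x)) (Prod.map (· + 1) id)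
        (insertTab F (tailRows T) 0 (T 0)[(T 0).findIdx (x < ·)]) := by
  rw [insertTab, rowInsert_eq, dif_pos h]
  simp [insertTab_add_one]

lemma insertTab_succ_of_not_lt (h : ¬ (T 0).findIdx (x < ·) < (T 0).length) :
    insertTab (F + 1) T 0 x = (consRows (T 0 ++ [x]) (tailRows T), 0, (T 0).length) := by
  rw [insertTab, rowInsert_eq, dif_neg h]
  refine Prod.ext ?_ rfl
  funext j; cases j <;> simp

lemma insertTab_succ_fst_zero : (insertTab (F + 1) T 0 x).1 0 = (rowInsert x (T 0)).1 := by
  rw [rowInsert_eq]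
  split_ifs with h
  · simp [insertTab_succ_of_lt F h]
  · simp [insertTab_succ_of_not_lt F h]

end Unfold

lemma ne_zero_of_findIdx_lt {T : ℕ → List ℝ} {n : ℕ} (hn : T n = []) {x : ℝ}
    (h : (T 0).findIdx (x < ·) < (T 0).length) : n ≠ 0 := by
  rintro rfl
  simp [hn] at h

section Bumping

variable {T : ℕ → List ℝ} {u u' : ℝ}

theorem insertTab_insertTab_row_le_of_lt (hT : ∀ j, (T j).SortedLT) (huu' : u < u') (F : ℕ) :
    (insertTab F (insertTab F T 0 u).1 0 u').2.1 ≤ (insertTab F T 0 u).2.1 := by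
  induction F generalizing T u u' with
  | zero => simp [insertTab]
  | succ F ih =>
    by_cases h : (T 0).findIdx (u < ·) < (T 0).length
    · have hc' := findIdx_lt_findIdx_set h huu'.le
      rw [insertTab_succ_of_lt F h]
      set R := (T 0).set ((T 0).findIdx (u < ·)) u
      by_cases h' : R.findIdx (u' < ·) < R.length
      · rw [insertTab_succ_of_lt F h']
        simp only [Prod.map_fst, Prod.map_snd, consRows_zero, tailRows_consRows,
          add_le_add_iff_right]
        refine ih (fun j => hT (j + 1)) ?_
        rw [List.getElem_set_ne hc'.ne]
        exact (hT 0).getElem_lt_getElem_of_lt hc'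
      · rw [insertTab_succ_of_not_lt F h']
        exact Nat.zero_le _
    · rw [insertTab_succ_of_not_lt F h,
        insertTab_succ_of_not_lt F (not_findIdx_lt_length_append h huu'.le)]

theorem insertTab_row_lt_insertTab_insertTab_of_lt (hT : ∀ j, (T j).SortedLT) {n F : ℕ}
    (hn : T n = []) (hF : n < F) (hu'u : u' < u) :
    (insertTab F T 0 u).2.1 < (insertTab F (insertTab F T 0 u).1 0 u').2.1 := by
  induction F generalizing T n u u' with
  | zero => omega
  | succ F ih =>
    by_cases h : (T 0).findIdx (u < ·) < (T 0).length
    · obtain ⟨m, rfl⟩ := Nat.exists_eq_succ_of_ne_zero (ne_zero_of_findIdx_lt hn h)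
      have hc' :
          ((T 0).set ((T 0).findIdx (u < ·)) u).findIdx (u' < ·) ≤ (T 0).findIdx (u < ·) :=
        findIdx_le_of_lt_getElem (by simpa using h) (by simpa using hu'u)
      rw [insertTab_succ_of_lt F h, insertTab_succ_of_lt F (hc'.trans_lt (by simpa using h))]
      simp only [Prod.map_fst, Prod.map_snd, consRows_zero, tailRows_consRows,
        add_lt_add_iff_right]
      refine ih (fun j => hT (j + 1)) hn (by omega) ?_
      simp only [List.getElem_set]
      split_ifs
      · exact lt_getElem_findIdx h
      · exact (hT 0).getElem_lt_getElem_of_lt (by omega)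
    · have h' : (T 0 ++ [u]).findIdx (u' < ·) < (T 0 ++ [u]).length :=
        List.findIdx_lt_length_of_exists ⟨u, by simp, by simpa using hu'u⟩
      rw [insertTab_succ_of_not_lt F h, insertTab_succ_of_lt F h']
      simp

theorem insertTab_row_le_of_lt (hT : ∀ j, (T j).SortedLT) (huu' : u < u') (F : ℕ) :
    (insertTab F T 0 u').2.1 ≤ (insertTab F T 0 u).2.1 := by
  induction F generalizing T u u' with
  | zero => simp [insertTab]
  | succ F ih =>
    have hcc := findIdx_le_findIdx_of_le (R := T 0) huu'.le
    by_cases h : (T 0).findIdx (u < ·) < (T 0).length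
    · rw [insertTab_succ_of_lt F h]
      by_cases h' : (T 0).findIdx (u' < ·) < (T 0).length
      · rw [insertTab_succ_of_lt F h']
        simp only [Prod.map_fst, Prod.map_snd, add_le_add_iff_right]
        rcases hcc.eq_or_lt with heq | hlt
        · simp only [← heq, le_refl]
        · exact ih (fun j => hT (j + 1)) ((hT 0).getElem_lt_getElem_of_lt hlt)
      · rw [insertTab_succ_of_not_lt F h']
        exact Nat.zero_le _
    · rw [insertTab_succ_of_not_lt F h, insertTab_succ_of_not_lt F (by omega)]

theorem insertTab_insertTab_row_le_insertTab_of_lt (hT : ∀ j, (T j).SortedLT) (huu' : u < u')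
    (F : ℕ) :
    (insertTab F (insertTab F T 0 u).1 0 u').2.1 ≤ (insertTab F T 0 u').2.1 := by
  induction F generalizing T u u' with
  | zero => simp [insertTab]
  | succ F ih =>
    by_cases h : (T 0).findIdx (u < ·) < (T 0).length
    · rw [insertTab_succ_of_lt F h]
      rcases (findIdx_le_findIdx_of_le (R := T 0) huu'.le).eq_or_lt with heq | hlt
      · -- `u'` would bump the entry that `u` bumps; after `u`, it bumps a larger one instead
        have hc' := findIdx_lt_findIdx_set h huu'.le
        set R := (T 0).set ((T 0).findIdx (u < ·)) u
        by_cases h' : R.findIdx (u' < ·) < R.length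
        · rw [insertTab_succ_of_lt F h', insertTab_succ_of_lt F (heq ▸ h)]
          simp only [Prod.map_fst, Prod.map_snd, consRows_zero, tailRows_consRows,
            add_le_add_iff_right, ← heq]
          refine insertTab_insertTab_row_le_of_lt (fun j => hT (j + 1)) ?_ F
          rw [List.getElem_set_ne hc'.ne]
          exact (hT 0).getElem_lt_getElem_of_lt hc'
        · rw [insertTab_succ_of_not_lt F h']
          exact Nat.zero_le _
      · -- `u'` bumps the same entry with or without `u`
        have hc' : ((T 0).set ((T 0).findIdx (u < ·)) u).findIdx (u' < ·) =
            (T 0).findIdx (u' < ·) :=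
          List.findIdx_set_of_eq h
            (by simp [not_lt.2 huu'.le, not_lt.2 (getElem_le_of_lt_findIdx hlt)])
        by_cases h' : (T 0).findIdx (u' < ·) < (T 0).length
        · rw [insertTab_succ_of_lt F (by simpa [hc'] using h'), insertTab_succ_of_lt F h']
          simp only [Prod.map_fst, Prod.map_snd, consRows_zero, tailRows_consRows,
            add_le_add_iff_right, hc', List.getElem_set_ne hlt.ne]
          exact ih (fun j => hT (j + 1)) ((hT 0).getElem_lt_getElem_of_lt hlt)
        · rw [insertTab_succ_of_not_lt F (by simpa [hc'] using h')]
          exact Nat.zero_le _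
    · rw [insertTab_succ_of_not_lt F h,
        insertTab_succ_of_not_lt F (not_findIdx_lt_length_append h huu'.le)]
      exact Nat.zero_le _

end Bumping

section Shape

/-! `T n = []` with `n < F` means that the fuel `F` suffices: the bumping path ends by row `n`. -/

variable {T : ℕ → List ℝ} {n F : ℕ} {x : ℝ}

lemma insertTab_row_le (hn : T n = []) (hF : n < F) : (insertTab F T 0 x).2.1 ≤ n := by
  induction F generalizing T n x with
  | zero => omega
  | succ F ih =>
    by_cases h : (T 0).findIdx (x < ·) < (T 0).length
    · obtain ⟨m, rfl⟩ := Nat.exists_eq_succ_of_ne_zero (ne_zero_of_findIdx_lt hn h)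
      rw [insertTab_succ_of_lt F h]
      simpa using ih (T := tailRows T) hn (by omega)
    · rw [insertTab_succ_of_not_lt F h]
      exact Nat.zero_le _

lemma insertTab_col_eq_length (hn : T n = []) (hF : n < F) :
    (insertTab F T 0 x).2.2 = (T (insertTab F T 0 x).2.1).length := by
  induction F generalizing T n x with
  | zero => omega
  | succ F ih =>
    by_cases h : (T 0).findIdx (x < ·) < (T 0).length
    · obtain ⟨m, rfl⟩ := Nat.exists_eq_succ_of_ne_zero (ne_zero_of_findIdx_lt hn h)
      rw [insertTab_succ_of_lt F h]
      simpa using ih (T := tailRows T) hn (by omega)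
    · rw [insertTab_succ_of_not_lt F h]

lemma length_insertTab (hn : T n = []) (hF : n < F) (j : ℕ) :
    ((insertTab F T 0 x).1 j).length =
      (T j).length + if j = (insertTab F T 0 x).2.1 then 1 else 0 := by
  induction F generalizing T n x j with
  | zero => omega
  | succ F ih =>
    by_cases h : (T 0).findIdx (x < ·) < (T 0).length
    · obtain ⟨m, rfl⟩ := Nat.exists_eq_succ_of_ne_zero (ne_zero_of_findIdx_lt hn h)
      rw [insertTab_succ_of_lt F h]
      cases j with
      | zero => simp
      | succ j => simpa using ih (T := tailRows T) hn (by omega) j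
    · rw [insertTab_succ_of_not_lt F h]
      cases j <;> simp

lemma length_insertTab_row (hn : T n = []) (hF : n < F) :
    ((insertTab F T 0 x).1 (insertTab F T 0 x).2.1).length =
      (T (insertTab F T 0 x).2.1).length + 1 := by
  simpa using length_insertTab (x := x) hn hF (insertTab F T 0 x).2.1

lemma insertTab_fst_eq_nil (hn : T n = []) (hF : n < F) {j : ℕ} (hj : n < j) (hTj : T j = []) :
    (insertTab F T 0 x).1 j = [] := by
  have := length_insertTab (x := x) hn hF j
  have := insertTab_row_le (x := x) hn hF
  rw [← List.length_eq_zero_iff]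
  simp_all
  omega

lemma insertTab_congr_fuel {F' : ℕ} (hn : T n = []) (hF : n < F) (hF' : n < F') :
    insertTab F T 0 x = insertTab F' T 0 x := by
  induction F generalizing T n x F' with
  | zero => omega
  | succ F ih =>
    obtain ⟨F', rfl⟩ := Nat.exists_eq_succ_of_ne_zero (by omega : F' ≠ 0)
    by_cases h : (T 0).findIdx (x < ·) < (T 0).length
    · obtain ⟨m, rfl⟩ := Nat.exists_eq_succ_of_ne_zero (ne_zero_of_findIdx_lt hn h)
      rw [insertTab_succ_of_lt F h, insertTab_succ_of_lt F' h,
        ih (T := tailRows T) hn (by omega) (by omega : m < F')]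
    · rw [insertTab_succ_of_not_lt F h, insertTab_succ_of_not_lt F' h]

end Shape

lemma mem_insertTab {F : ℕ} {T : ℕ → List ℝ} {x v : ℝ} {j : ℕ}
    (hv : v ∈ (insertTab F T 0 x).1 j) : v = x ∨ ∃ i, v ∈ T i := by
  induction F generalizing T x j with
  | zero => exact Or.inr ⟨j, hv⟩
  | succ F ih =>
    by_cases h : (T 0).findIdx (x < ·) < (T 0).length
    · rw [insertTab_succ_of_lt F h] at hv
      cases j with
      | zero => exact (List.mem_or_eq_of_mem_set hv).symm.imp id fun hv => ⟨0, hv⟩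
      | succ j =>
        rcases ih hv with rfl | ⟨i, hi⟩
        · exact Or.inr ⟨0, List.getElem_mem _⟩
        · exact Or.inr ⟨i + 1, hi⟩
    · rw [insertTab_succ_of_not_lt F h] at hv
      cases j with
      | zero =>
        rcases List.mem_append.1 hv with hv | hv
        · exact Or.inr ⟨0, hv⟩
        · exact Or.inl (List.mem_singleton.1 hv)
      | succ j => exact Or.inr ⟨j + 1, hv⟩

structure IsTableau (T : ℕ → List ℝ) : Prop where
  sortedLT : ∀ j, (T j).SortedLT
  rowBelow : ∀ j, RowBelow (T j) (T (j + 1))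
  disjoint : ∀ i j, i < j → (T i).Disjoint (T j)

namespace IsTableau

variable {T : ℕ → List ℝ}

lemma nil : IsTableau fun _ => [] :=
  ⟨fun _ => List.Pairwise.nil.sortedLT, fun _ => ⟨le_rfl, fun _ h => by simp at h⟩,
    fun _ _ _ => by simp⟩

lemma tail (hT : IsTableau T) : IsTableau (tailRows T) :=
  ⟨fun j => hT.sortedLT _, fun j => hT.rowBelow _, fun i j hij => hT.disjoint _ _ (by omega)⟩

lemma cons {R : List ℝ} (hT : IsTableau T) (hR : R.SortedLT) (hRT : RowBelow R (T 0))
    (hdisj : ∀ j, R.Disjoint (T j)) : IsTableau (consRows R T) where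
  sortedLT j := by cases j <;> simp [hR, hT.sortedLT]
  rowBelow j := by cases j <;> simp [hRT, hT.rowBelow]
  disjoint i j hij := by
    obtain ⟨j, rfl⟩ := Nat.exists_eq_succ_of_ne_zero (by omega : j ≠ 0)
    cases i with
    | zero => exact hdisj j
    | succ i => exact hT.disjoint i j (by omega)

lemma length_antitone (hT : IsTableau T) : Antitone fun j => (T j).length :=
  antitone_nat_of_succ_le fun j => (hT.rowBelow j).1

lemma eq_nil_of_le (hT : IsTableau T) {n j : ℕ} (hn : T n = []) (hj : n ≤ j) : T j = [] :=
  List.eq_nil_of_length_eq_zero (by simpa [hn] using hT.length_antitone hj)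

theorem insertTab (hT : IsTableau T) {x : ℝ} (hx : ∀ j, x ∉ T j) {n F : ℕ} (hn : T n = [])
    (hF : n < F) : IsTableau (_root_.insertTab F T 0 x).1 := by
  induction F generalizing T n x with
  | zero => omega
  | succ F ih =>
    by_cases h : (T 0).findIdx (x < ·) < (T 0).length
    · obtain ⟨m, rfl⟩ := Nat.exists_eq_succ_of_ne_zero (ne_zero_of_findIdx_lt hn h)
      obtain ⟨F, rfl⟩ := Nat.exists_eq_succ_of_ne_zero (by omega : F ≠ 0)
      have hy : ∀ j, (T 0)[(T 0).findIdx (x < ·)] ∉ tailRows T j :=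
        fun j => hT.disjoint 0 (j + 1) (by omega) (List.getElem_mem _)
      rw [insertTab_succ_of_lt _ h]
      refine (ih hT.tail hy hn (by omega)).cons
        (sortedLT_set_findIdx (hT.sortedLT 0) (hx 0) h) ?_ fun j v hv hv' => ?_
      · rw [insertTab_succ_fst_zero]
        exact (hT.rowBelow 0).set_rowInsert (hT.sortedLT 0) h
      · rcases mem_insertTab hv' with rfl | ⟨i, hi⟩
        · exact List.getElem_notMem_set (hT.sortedLT 0).nodup h (lt_getElem_findIdx h).ne hv
        · rcases List.mem_or_eq_of_mem_set hv with hv | rfl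
          · exact hT.disjoint 0 (i + 1) (by omega) hv hi
          · exact hx _ hi
    · rw [insertTab_succ_of_not_lt F h]
      refine hT.tail.cons (sortedLT_append_of_not_findIdx_lt (hT.sortedLT 0) (hx 0) h)
        ((hT.rowBelow 0).append x) fun j v hv hv' => ?_
      rcases List.mem_append.1 hv with hv | hv
      · exact hT.disjoint 0 (j + 1) (by omega) hv hv'
      · exact hx (j + 1) (List.mem_singleton.1 hv ▸ hv')

lemma insertTab_fst_succ_eq_nil (hT : IsTableau T) {n F : ℕ} (hn : T n = []) (hF : n < F)
    (x : ℝ) : (_root_.insertTab F T 0 x).1 (n + 1) = [] :=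
  insertTab_fst_eq_nil hn hF (Nat.lt_succ_self n) (hT.eq_nil_of_le hn (Nat.le_succ n))

end IsTableau

section Boxes

variable {T : ℕ → List ℝ} {n F : ℕ} {u u' : ℝ}

theorem pOrd_insertTab_insertTab_of_lt (hT : IsTableau T) (hn : T n = []) (hF : n + 1 < F)
    (hu : ∀ j, u ∉ T j) (huu' : u < u') :
    pOrd (insertTab F T 0 u).2 (insertTab F (insertTab F T 0 u).1 0 u').2 ∧
      (insertTab F T 0 u).2 ≠ (insertTab F (insertTab F T 0 u).1 0 u').2 := by
  have hr := insertTab_insertTab_row_le_of_lt hT.sortedLT huu' F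
  have hcol : (insertTab F T 0 u).2.2 < (insertTab F (insertTab F T 0 u).1 0 u').2.2 := by
    rw [insertTab_col_eq_length (F := F) hn (by omega),
      insertTab_col_eq_length (hT.insertTab_fst_succ_eq_nil hn (by omega) u) hF]
    have := (hT.insertTab (F := F) hu hn (by omega)).length_antitone hr
    have := length_insertTab_row (F := F) (x := u) hn (by omega)
    simp only at *
    omega
  exact ⟨⟨hcol.le, hr⟩, fun h => hcol.ne (congrArg Prod.snd h)⟩

theorem pOrd_insertTab_insertTab_of_gt (hT : IsTableau T) (hn : T n = []) (hF : n + 1 < F)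
    (hu : ∀ j, u ∉ T j) (hu'u : u' < u) :
    pOrd (insertTab F (insertTab F T 0 u).1 0 u').2 (insertTab F T 0 u).2 ∧
      (insertTab F (insertTab F T 0 u).1 0 u').2 ≠ (insertTab F T 0 u).2 := by
  have hr := insertTab_row_lt_insertTab_insertTab_of_lt (F := F) hT.sortedLT hn (by omega) hu'u
  have hcol : (insertTab F (insertTab F T 0 u).1 0 u').2.2 ≤ (insertTab F T 0 u).2.2 := by
    rw [insertTab_col_eq_length (F := F) hn (by omega),
      insertTab_col_eq_length (hT.insertTab_fst_succ_eq_nil hn (by omega) u) hF]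
    have := (hT.insertTab (F := F) hu hn (by omega)).length_antitone (show _ + 1 ≤ _ from hr)
    have := length_insertTab (x := u) hn (by omega : n < F) ((insertTab F T 0 u).2.1 + 1)
    have := hT.length_antitone (Nat.le_add_right (insertTab F T 0 u).2.1 1)
    simp only [Nat.succ_ne_self, if_false, add_zero] at *
    omega
  exact ⟨⟨hcol, hr.le⟩, fun h => hr.ne' (congrArg (·.1) h)⟩

theorem pOrd_insertTab_of_lt (hT : IsTableau T) (hn : T n = []) (hF : n < F) (huu' : u < u') :
    pOrd (insertTab F T 0 u).2 (insertTab F T 0 u').2 := by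
  have hr := insertTab_row_le_of_lt hT.sortedLT huu' F
  refine ⟨?_, hr⟩
  rw [insertTab_col_eq_length hn hF, insertTab_col_eq_length hn hF]
  exact hT.length_antitone hr

theorem pOrd_insertTab_insertTab_same_of_lt (hT : IsTableau T) (hn : T n = [])
    (hF : n + 1 < F) (hu : ∀ j, u ∉ T j) (huu' : u < u') :
    pOrd (insertTab F T 0 u').2 (insertTab F (insertTab F T 0 u).1 0 u').2 := by
  have hr := insertTab_insertTab_row_le_insertTab_of_lt hT.sortedLT huu' F
  refine ⟨?_, hr⟩
  rw [insertTab_col_eq_length (F := F) hn (by omega),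
    insertTab_col_eq_length (hT.insertTab_fst_succ_eq_nil hn (by omega) u) hF]
  have := (hT.insertTab (F := F) hu hn (by omega)).length_antitone hr
  have := length_insertTab (x := u) hn (by omega : n < F) (insertTab F T 0 u').2.1
  simp only at *
  split_ifs at * <;> omega

end Boxes

noncomputable def rsTableau (F : ℕ) (l : List ℝ) : ℕ → List ℝ :=
  l.foldl (fun T x => (insertTab F T 0 x).1) fun _ => []

section Tableau

variable {F : ℕ}

lemma rsTableau_append_singleton (l : List ℝ) (x : ℝ) :
    rsTableau F (l ++ [x]) = (insertTab F (rsTableau F l) 0 x).1 := by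
  simp [rsTableau, List.foldl_append]

lemma rsTableau_eq_nil {l : List ℝ} (hF : l.length < F) {j : ℕ} (hj : l.length ≤ j) :
    rsTableau F l j = [] := by
  induction l using List.reverseRecOn generalizing j with
  | nil => rfl
  | append_singleton l x ih =>
    simp only [List.length_append, List.length_singleton] at hF hj
    rw [rsTableau_append_singleton]
    exact insertTab_fst_eq_nil (ih (by omega) le_rfl) (by omega) (by omega)
      (ih (by omega) (by omega))

lemma rsTableau_congr_fuel {F' : ℕ} {l : List ℝ} (hF : l.length < F) (hF' : l.length < F') :
    rsTableau F l = rsTableau F' l := by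
  induction l using List.reverseRecOn with
  | nil => rfl
  | append_singleton l x ih =>
    simp only [List.length_append, List.length_singleton] at hF hF'
    rw [rsTableau_append_singleton, rsTableau_append_singleton, ih (by omega) (by omega),
      insertTab_congr_fuel (rsTableau_eq_nil (F := F') (by omega) le_rfl)
        (by omega : l.length < F) (by omega : l.length < F')]

lemma mem_rsTableau {l : List ℝ} {j : ℕ} {v : ℝ} (hv : v ∈ rsTableau F l j) : v ∈ l := by
  induction l using List.reverseRecOn generalizing j with
  | nil => simp [rsTableau] at hv
  | append_singleton l x ih =>
    rw [rsTableau_append_singleton] at hv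
    rcases mem_insertTab hv with rfl | ⟨i, hi⟩
    · simp
    · simp [ih hi]

lemma isTableau_rsTableau {l : List ℝ} (hl : l.Nodup) (hF : l.length < F) :
    IsTableau (rsTableau F l) := by
  induction l using List.reverseRecOn with
  | nil => exact IsTableau.nil
  | append_singleton l x ih =>
    simp only [List.nodup_append, List.nodup_cons, List.not_mem_nil, not_false_eq_true,
      List.nodup_nil, and_self, List.mem_singleton, true_and] at hl
    simp only [List.length_append, List.length_singleton] at hF
    rw [rsTableau_append_singleton]
    exact (ih hl.1 (by omega)).insertTab (fun j hx => hl.2 x (mem_rsTableau hx) x rfl rfl)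
      (rsTableau_eq_nil (by omega) le_rfl) (by omega)

lemma recPos_append_singleton {l : List ℝ} (hF : l.length < F) (x : ℝ) :
    RecPos (l ++ [x]) = (insertTab F (rsTableau F l) 0 x).2 := by
  have hfst := List.foldl_hom Prod.fst (l := l)
    (g₁ := fun (acc : (ℕ → List ℝ) × List (ℕ × ℕ)) x =>
      ((insertTab (l.length + 2) acc.1 0 x).1, acc.2 ++ [(insertTab (l.length + 2) acc.1 0 x).2]))
    (g₂ := fun T x => (insertTab (l.length + 2) T 0 x).1) (init := (fun _ => [], []))
    fun _ _ => rfl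
  simp only [RecPos, RSsteps, List.length_append, List.length_singleton, List.foldl_append,
    List.foldl_cons, List.foldl_nil, List.getLastD_concat]
  rw [← hfst]
  change (insertTab (l.length + 2) (rsTableau (l.length + 2) l) 0 x).2 = _
  rw [rsTableau_congr_fuel (by omega) hF,
    insertTab_congr_fuel (rsTableau_eq_nil hF le_rfl) (by omega) hF]

end Tableau

/-- Monotonicity properties of the position of the last box added by
Robinson–Schensted insertion. -/
theorem recPos_monotone (a : List ℝ) (b b' : ℝ)
    (hd : (a ++ [b, b']).Pairwise (· ≠ ·)) (hbb : b < b') :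
    (pOrd (RecPos (a ++ [b])) (RecPos (a ++ [b, b'])) ∧
      RecPos (a ++ [b]) ≠ RecPos (a ++ [b, b'])) ∧
    (pOrd (RecPos (a ++ [b', b])) (RecPos (a ++ [b'])) ∧
      RecPos (a ++ [b', b]) ≠ RecPos (a ++ [b'])) ∧
    pOrd (RecPos (a ++ [b])) (RecPos (a ++ [b'])) ∧
    pOrd (RecPos (a ++ [b'])) (RecPos (a ++ [b, b'])) := by
  obtain ⟨ha, -, hab⟩ := List.nodup_append.1 (show (a ++ [b, b']).Nodup from hd)
  set F := a.length + 3
  set T := rsTableau F a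
  have hT : IsTableau T := isTableau_rsTableau ha (by omega)
  have hn : T a.length = [] := rsTableau_eq_nil (by omega) le_rfl
  have hF : a.length + 1 < F := by omega
  have hnew : ∀ x ∈ [b, b'], ∀ j, x ∉ T j :=
    fun x hx j hxT => hab _ (mem_rsTableau hxT) _ hx rfl
  have hpair : ∀ x y, RecPos (a ++ [x, y]) = (insertTab F (insertTab F T 0 x).1 0 y).2 := by
    intro x y
    rw [show a ++ [x, y] = a ++ [x] ++ [y] by simp, recPos_append_singleton (by simp; omega),
      rsTableau_append_singleton]
  rw [recPos_append_singleton (F := F) (by omega), recPos_append_singleton (F := F) (by omega),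
    hpair, hpair]
  exact ⟨pOrd_insertTab_insertTab_of_lt hT hn hF (hnew b (by simp)) hbb,
    pOrd_insertTab_insertTab_of_gt hT hn hF (hnew b' (by simp)) hbb,
    pOrd_insertTab_of_lt hT hn (by omega) hbb,
    pOrd_insertTab_insertTab_same_of_lt hT hn hF (hnew b (by simp)) hbb⟩
end

section
/- The jeu de taquin map J on the space Ω of infinite Young tableaux preserves the Plancherel measure P of infinite order: for every measurable set E ⊆ Ω, P(J⁻¹(E)) = P(E). -/
open MeasureTheory

/-- One step of the jeu de taquin path: move to whichever of the lower/right
neighbours (cells are `(row, column)`) carries the smaller entry; an entry `0`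
represents an empty cell, treated as `+∞`. -/
def jdtStepF (t : ℕ → ℕ → ℕ) (c : ℕ × ℕ) : ℕ × ℕ :=
  if t (c.1 + 1) c.2 ≠ 0 ∧ (t c.1 (c.2 + 1) = 0 ∨ t (c.1 + 1) c.2 < t c.1 (c.2 + 1)) then
    (c.1 + 1, c.2)
  else (c.1, c.2 + 1)

/-- The jeu de taquin path, starting from the corner box. -/
def jdtPathF (t : ℕ → ℕ → ℕ) : ℕ → ℕ × ℕ := fun k => (jdtStepF t)^[k] (0, 0)

open scoped Classical in
/-- The jeu de taquin transformation. -/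
noncomputable def jdtF (t : ℕ → ℕ → ℕ) : ℕ → ℕ → ℕ := fun i j =>
  if ∃ k, jdtPathF t k = (i, j) then
    t (jdtStepF t (i, j)).1 (jdtStepF t (i, j)).2 - 1
  else t i j - 1

/-- `t` is an infinite Young tableau: every cell of the quadrant is filled, every
positive integer appears exactly once, and entries increase along rows and columns
(cells are `(row, column)`). -/
def IsInfYT (t : ℕ → ℕ → ℕ) : Prop :=
  (∀ i j, 1 ≤ t i j) ∧ (∀ n, 1 ≤ n → ∃! c : ℕ × ℕ, t c.1 c.2 = n) ∧
  (∀ i j, t i j < t i (j + 1)) ∧ (∀ i j, t i j < t (i + 1) j)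

/-- The cylinder event: the entries `1, …, n` of the infinite tableau form exactly the
standard Young tableau `s`. -/
def cylEvent (μ : YoungDiagram) (s : SYT μ) : Set (ℕ → ℕ → ℕ) :=
  { t | ∀ i j, (i, j) ∈ μ → t i j = s.entry i j }

/-- `P` is the Plancherel measure of infinite order: a probability measure concentrated
on infinite Young tableaux giving each cylinder event its Plancherel probability
`fSYT μ / (μ.card)!`.  (These properties characterise the Plancherel measure.) -/
def PlancherelLike (P : MeasureTheory.Measure (ℕ → ℕ → ℕ)) : Prop :=
  MeasureTheory.IsProbabilityMeasure P ∧ P { t | IsInfYT t } = 1 ∧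
  ∀ (μ : YoungDiagram) (s : SYT μ),
    P (cylEvent μ s) = ENNReal.ofReal ((fSYT μ : ℝ) / (Nat.factorial μ.card))

/-!
Write `t↾N` for the filling `trunc N t` keeping the entries `≤ N` of `t`. For an infinite
tableau, `(jdtF t)↾N = jdtF (t↾(N+1))`: the slide paths of `t` and of its truncation agree until
they leave the support of the truncation. Under `P`, `t↾(N+1)` is a standard tableau with
`N + 1` cells, equal to `s` with probability `f^λ / (N+1)!` depending only on the shape `λ` of
`s`. For a fixed shape `ν` the finite slide `s ↦ jdtF s` is injective (two slide paths with the
same output cannot merge) and lands, like the removal `s ↦ s↾N` of the largest entry, which is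
a bijection, in the standard tableaux of the shapes covered by `ν`. Hence `jdtF s = (ψ s)↾N` for
a shape-preserving permutation `ψ`, so `(jdtF t)↾N` and `t↾N` have the same law under `P`; and
the events decided by some `t↾N` form a π-system generating the σ-algebra.
-/

namespace JeuDeTaquin

def ev (t : ℕ → ℕ → ℕ) (c : ℕ × ℕ) : ℕ := t c.1 c.2

def down (c : ℕ × ℕ) : ℕ × ℕ := (c.1 + 1, c.2)

def right (c : ℕ × ℕ) : ℕ × ℕ := (c.1, c.2 + 1)

def IsStep (c d : ℕ × ℕ) : Prop := d = down c ∨ d = right c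

/-- `0` encodes an empty cell: the nonempty cells form a lower set of the quadrant, finite or
not, filled increasingly along rows and columns. -/
def IsTableau (t : ℕ → ℕ → ℕ) : Prop :=
  ∀ ⦃c d⦄, IsStep c d → ev t d ≠ 0 → ev t c ≠ 0 ∧ ev t c < ev t d

lemma IsStep.fst_add_snd {c d : ℕ × ℕ} (h : IsStep c d) : d.1 + d.2 = c.1 + c.2 + 1 := by
  rcases h with rfl | rfl <;> simp only [down, right] <;> omega

lemma IsStep.le {c d : ℕ × ℕ} (h : IsStep c d) : c ≤ d := by
  rcases h with rfl | rfl <;> simp [down, right, Prod.le_def]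

lemma IsStep.ne {c d : ℕ × ℕ} (h : IsStep c d) : c ≠ d := by
  rintro rfl; have := h.fst_add_snd; omega

lemma IsTableau.ev_eq_zero_of_isStep {t : ℕ → ℕ → ℕ} (ht : IsTableau t) {c d : ℕ × ℕ}
    (h : IsStep c d) (hc : ev t c = 0) : ev t d = 0 := by
  by_contra hd; exact (ht h hd).1 hc

lemma IsTableau.ev_add_le {t : ℕ → ℕ → ℕ} (ht : IsTableau t) {c d : ℕ × ℕ} (hcd : c ≤ d)
    (hd : ev t d ≠ 0) : ev t c ≠ 0 ∧ ev t c + (d.1 - c.1) + (d.2 - c.2) ≤ ev t d := by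
  obtain ⟨n, hn⟩ : ∃ n, (d.1 - c.1) + (d.2 - c.2) = n := ⟨_, rfl⟩
  induction n generalizing c with
  | zero =>
    obtain rfl : c = d := Prod.ext (by have := hcd.1; omega) (by have := hcd.2; omega)
    omega
  | succ n ih =>
    obtain ⟨c', hstep, hc'd⟩ : ∃ c', IsStep c c' ∧ c' ≤ d := by
      rcases Nat.lt_or_ge c.1 d.1 with h | h
      · exact ⟨down c, .inl rfl, h, hcd.2⟩
      · exact ⟨right c, .inr rfl, hcd.1, show c.2 + 1 ≤ d.2 by have := hcd.1; omega⟩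
    have hle := hstep.le
    have := hstep.fst_add_snd
    have := hc'd.1; have := hc'd.2; have := hle.1; have := hle.2
    obtain ⟨hc'0, hc'le⟩ := ih hc'd (by omega)
    obtain ⟨hc0, hlt⟩ := ht hstep hc'0
    exact ⟨hc0, by omega⟩

/-! ### Slide paths -/

lemma isStep_jdtStepF (t : ℕ → ℕ → ℕ) (c : ℕ × ℕ) : IsStep c (jdtStepF t c) := by
  unfold jdtStepF; split_ifs
  exacts [.inl rfl, .inr rfl]

lemma ev_jdtStepF_le (t : ℕ → ℕ → ℕ) {c d : ℕ × ℕ} (h : IsStep c d) (hd : ev t d ≠ 0) :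
    ev t (jdtStepF t c) ≠ 0 ∧ ev t (jdtStepF t c) ≤ ev t d := by
  unfold jdtStepF
  rcases h with rfl | rfl <;> split_ifs with hs <;> simp only [ev, down, right] at hd hs ⊢ <;> omega

lemma jdtPathF_succ (t : ℕ → ℕ → ℕ) (k : ℕ) :
    jdtPathF t (k + 1) = jdtStepF t (jdtPathF t k) :=
  Function.iterate_succ_apply' _ _ _

lemma jdtPathF_fst_add_snd (t : ℕ → ℕ → ℕ) (k : ℕ) :
    (jdtPathF t k).1 + (jdtPathF t k).2 = k := by
  induction k with
  | zero => rfl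
  | succ k ih => rw [jdtPathF_succ, (isStep_jdtStepF t _).fst_add_snd, ih]

lemma jdtPathF_injective (t : ℕ → ℕ → ℕ) : Function.Injective (jdtPathF t) := fun k l h => by
  rw [← jdtPathF_fst_add_snd t k, ← jdtPathF_fst_add_snd t l, h]

lemma jdtPathF_mono (t : ℕ → ℕ → ℕ) : Monotone (jdtPathF t) :=
  monotone_nat_of_le_succ fun k => by
    rw [jdtPathF_succ]; exact (isStep_jdtStepF t _).le

/-- The cell whose entry slides into `c` (see `ev_jdtF`). -/
def jdtSource (t : ℕ → ℕ → ℕ) (c : ℕ × ℕ) : ℕ × ℕ :=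
  if jdtPathF t (c.1 + c.2) = c then jdtStepF t c else c

lemma ev_jdtF (t : ℕ → ℕ → ℕ) (c : ℕ × ℕ) : ev (jdtF t) c = ev t (jdtSource t c) - 1 := by
  have hpath : (∃ k, jdtPathF t k = (c.1, c.2)) ↔ jdtPathF t (c.1 + c.2) = c :=
    ⟨fun ⟨k, hk⟩ => by rw [Prod.mk.eta] at hk; subst hk; rw [jdtPathF_fst_add_snd],
      fun h => ⟨_, h⟩⟩
  simp only [ev, jdtF, jdtSource, hpath]
  split_ifs <;> rfl

lemma jdtSource_jdtPathF (t : ℕ → ℕ → ℕ) (k : ℕ) :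
    jdtSource t (jdtPathF t k) = jdtPathF t (k + 1) := by
  rw [jdtSource, jdtPathF_fst_add_snd, if_pos rfl, jdtPathF_succ]

lemma jdtSource_of_eq {t : ℕ → ℕ → ℕ} {c : ℕ × ℕ} (h : jdtPathF t (c.1 + c.2) = c) :
    jdtSource t c = jdtPathF t (c.1 + c.2 + 1) := by
  rw [jdtSource, if_pos h, jdtPathF_succ, h]

lemma jdtSource_of_ne {t : ℕ → ℕ → ℕ} {c : ℕ × ℕ} (h : jdtPathF t (c.1 + c.2) ≠ c) :
    jdtSource t c = c :=
  if_neg h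

lemma jdtSource_eq_or_isStep (t : ℕ → ℕ → ℕ) (c : ℕ × ℕ) :
    jdtSource t c = c ∨ IsStep c (jdtSource t c) := by
  unfold jdtSource; split_ifs
  exacts [.inr (isStep_jdtStepF t c), .inl rfl]

lemma jdtSource_injective (t : ℕ → ℕ → ℕ) : Function.Injective (jdtSource t) := by
  have hoff : ∀ k c, jdtPathF t (c.1 + c.2) ≠ c → jdtPathF t (k + 1) ≠ c := by
    rintro k c hc rfl
    rw [jdtPathF_fst_add_snd] at hc
    exact hc rfl
  intro c d h
  by_cases hc : jdtPathF t (c.1 + c.2) = c <;> by_cases hd : jdtPathF t (d.1 + d.2) = d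
  · rw [← hc, ← hd, jdtSource_jdtPathF, jdtSource_jdtPathF] at h
    have := jdtPathF_injective t h
    rw [← hc, ← hd, show c.1 + c.2 = d.1 + d.2 by omega]
  · rw [← hc, jdtSource_jdtPathF, jdtSource_of_ne hd] at h
    exact absurd h (hoff _ d hd)
  · rw [← hd, jdtSource_jdtPathF, jdtSource_of_ne hc] at h
    exact absurd h.symm (hoff _ c hc)
  · rwa [jdtSource_of_ne hc, jdtSource_of_ne hd] at h

lemma IsTableau.ev_le_ev_jdtSource {t : ℕ → ℕ → ℕ} (ht : IsTableau t) (c : ℕ × ℕ)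
    (h : ev t (jdtSource t c) ≠ 0) : ev t c ≤ ev t (jdtSource t c) := by
  rcases jdtSource_eq_or_isStep t c with hc | hc
  · rw [hc]
  · exact (ht hc h).2.le

/-! ### Truncation -/

def trunc (n : ℕ) (t : ℕ → ℕ → ℕ) : ℕ → ℕ → ℕ := fun i j => if t i j ≤ n then t i j else 0

lemma ev_trunc (n : ℕ) (t : ℕ → ℕ → ℕ) (c : ℕ × ℕ) :
    ev (trunc n t) c = if ev t c ≤ n then ev t c else 0 := rfl

lemma ev_trunc_eq_zero {n : ℕ} {t : ℕ → ℕ → ℕ} {c : ℕ × ℕ} (h : n < ev t c) :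
    ev (trunc n t) c = 0 := by
  rw [ev_trunc, if_neg (by omega)]

lemma ev_trunc_of_ne_zero {n : ℕ} {t : ℕ → ℕ → ℕ} {c : ℕ × ℕ} (h : ev (trunc n t) c ≠ 0) :
    ev (trunc n t) c = ev t c := by
  rw [ev_trunc] at h ⊢; split_ifs at h ⊢ <;> trivial

lemma trunc_trunc {m n : ℕ} (h : n ≤ m) (t : ℕ → ℕ → ℕ) : trunc n (trunc m t) = trunc n t := by
  funext i j; simp only [trunc]; split_ifs <;> omega

lemma IsTableau.trunc {t : ℕ → ℕ → ℕ} (ht : IsTableau t) (n : ℕ) : IsTableau (trunc n t) := by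
  intro c d hcd hd
  have hdn : ev t d ≤ n := by
    by_contra h
    exact hd (ev_trunc_eq_zero (not_le.mp h))
  rw [ev_trunc, if_pos hdn] at hd
  obtain ⟨h1, h2⟩ := ht hcd hd
  simp only [ev_trunc]
  split_ifs <;> omega

section PositiveTableau

variable {t : ℕ → ℕ → ℕ} (ht : IsTableau t) (hpos : ∀ c, ev t c ≠ 0)

include hpos in
lemma jdtStepF_trunc {n : ℕ} {c d : ℕ × ℕ} (h : IsStep c d) (hd : ev t d ≤ n) :
    jdtStepF (trunc n t) c = jdtStepF t c := by
  have := hpos (down c); have := hpos (right c)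
  rcases h with rfl | rfl <;> simp only [jdtStepF, trunc, ev, down, right] at * <;>
    split_ifs <;> first | rfl | omega

include ht hpos

lemma jdtPathF_trunc (n k : ℕ) :
    jdtPathF (trunc n t) k = jdtPathF t k ∨
      ev (trunc n t) (jdtPathF (trunc n t) k) = 0 ∧ ev (trunc n t) (jdtPathF t k) = 0 := by
  induction k with
  | zero => exact .inl rfl
  | succ k ih =>
    rw [jdtPathF_succ, jdtPathF_succ]
    rcases ih with h | h
    · rw [h]
      by_cases hsmall : ∃ d, IsStep (jdtPathF t k) d ∧ ev t d ≤ n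
      · obtain ⟨d, hd, hdn⟩ := hsmall
        exact .inl (jdtStepF_trunc hpos hd hdn)
      · push Not at hsmall
        exact .inr ⟨ev_trunc_eq_zero (hsmall _ (isStep_jdtStepF _ _)),
          ev_trunc_eq_zero (hsmall _ (isStep_jdtStepF _ _))⟩
    · exact .inr ⟨(ht.trunc n).ev_eq_zero_of_isStep (isStep_jdtStepF _ _) h.1,
        (ht.trunc n).ev_eq_zero_of_isStep (isStep_jdtStepF _ _) h.2⟩

lemma ev_trunc_jdtSource (n : ℕ) (c : ℕ × ℕ) :
    ev (trunc n t) (jdtSource (trunc n t) c) = ev (trunc n t) (jdtSource t c) := by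
  set t' := trunc n t
  set k := c.1 + c.2
  have hsucc : ev t' (jdtPathF t' (k + 1)) = ev t' (jdtPathF t (k + 1)) := by
    rcases jdtPathF_trunc ht hpos n (k + 1) with h | h
    · rw [h]
    · rw [h.1, h.2]
  have hzero : ev t' (jdtPathF t' k) = 0 → ev t' (jdtPathF t' (k + 1)) = 0 := by
    rw [jdtPathF_succ]; exact (ht.trunc n).ev_eq_zero_of_isStep (isStep_jdtStepF _ _)
  by_cases hc' : jdtPathF t' k = c <;> by_cases hc : jdtPathF t k = c
  · rw [jdtSource_of_eq hc', jdtSource_of_eq hc, hsucc]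
  · obtain ⟨h1, -⟩ := (jdtPathF_trunc ht hpos n k).resolve_left (by rw [hc']; exact Ne.symm hc)
    rw [jdtSource_of_eq hc', jdtSource_of_ne hc, hzero h1, ← hc', h1]
  · obtain ⟨h1, h2⟩ := (jdtPathF_trunc ht hpos n k).resolve_left (by rw [hc]; exact hc')
    rw [jdtSource_of_ne hc', jdtSource_of_eq hc, ← hsucc, hzero h1, ← hc, h2]
  · rw [jdtSource_of_ne hc', jdtSource_of_ne hc]

lemma trunc_jdtF (n : ℕ) : trunc n (jdtF t) = jdtF (trunc (n + 1) t) := by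
  funext i j
  change ev (trunc n (jdtF t)) (i, j) = ev (jdtF (trunc (n + 1) t)) (i, j)
  rw [ev_trunc, ev_jdtF, ev_jdtF, ev_trunc_jdtSource ht hpos, ev_trunc]
  split_ifs <;> omega

end PositiveTableau

end JeuDeTaquin

/-! ### Standard tableaux -/

instance : Countable YoungDiagram :=
  Function.Injective.countable fun _ _ => YoungDiagram.ext

open JeuDeTaquin

namespace SYT

variable {μ : YoungDiagram} (s : SYT μ)

lemma entry_injective : Function.Injective (SYT.entry (μ := μ)) := by
  rintro ⟨⟩ ⟨⟩ h; simp_all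

lemma mem_iff_ev_ne_zero {c : ℕ × ℕ} : c ∈ μ ↔ ev s.entry c ≠ 0 := by
  rw [← Nat.one_le_iff_ne_zero, ev, ← s.mem_iff]

lemma shape_eq_of_entry_eq {μ' : YoungDiagram} {s' : SYT μ'} (h : s.entry = s'.entry) :
    μ = μ' :=
  SetLike.ext fun c => by rw [s.mem_iff_ev_ne_zero, s'.mem_iff_ev_ne_zero, h]

lemma ev_eq_zero {c : ℕ × ℕ} (hc : c ∉ μ) : ev s.entry c = 0 :=
  not_not.mp ((s.mem_iff_ev_ne_zero).not.mp hc)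

lemma ev_le_card (c : ℕ × ℕ) : ev s.entry c ≤ μ.card := s.le_card c.1 c.2

lemma ev_injOn {c d : ℕ × ℕ} (hc : c ∈ μ) (hd : d ∈ μ) (h : ev s.entry c = ev s.entry d) :
    c = d :=
  s.injOn c.1 c.2 d.1 d.2 hc hd h

lemma isTableau : IsTableau s.entry := by
  intro c d hcd hd
  have hdμ := (s.mem_iff_ev_ne_zero).mpr hd
  refine ⟨(s.mem_iff_ev_ne_zero).mp (μ.up_left_mem hcd.le.1 hcd.le.2 hdμ), ?_⟩
  rcases hcd with rfl | rfl
  exacts [s.col_lt c.1 c.2 hdμ, s.row_lt c.1 c.2 hdμ]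

instance (μ : YoungDiagram) : Finite (SYT μ) :=
  Finite.of_injective (fun (s : SYT μ) (c : μ.cells) => (⟨ev s.entry c, Nat.lt_succ_of_le
    (s.ev_le_card c)⟩ : Fin (μ.card + 1))) fun s s' h => entry_injective <| by
      funext i j
      by_cases hc : (i, j) ∈ μ
      · simpa [ev] using congrFun h ⟨(i, j), hc⟩
      · have := s.mem_iff i j; have := s'.mem_iff i j
        simp only [hc, false_iff, not_le, Nat.lt_one_iff] at *
        omega

lemma exists_ev_eq {v : ℕ} (h1 : 1 ≤ v) (h2 : v ≤ μ.card) : ∃ c ∈ μ, ev s.entry c = v := by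
  have himage : μ.cells.image (ev s.entry) = Finset.Icc 1 μ.card := by
    refine Finset.eq_of_subset_of_card_le (fun v hv => ?_) ?_
    · obtain ⟨c, hc, rfl⟩ := Finset.mem_image.mp hv
      have := (s.mem_iff_ev_ne_zero).mp hc
      exact Finset.mem_Icc.mpr ⟨by omega, s.ev_le_card c⟩
    · rw [Nat.card_Icc, Finset.card_image_of_injOn fun c hc d hd =>
        s.ev_injOn hc hd]
      rfl
  obtain ⟨c, hc, hcv⟩ := Finset.mem_image.mp (himage ▸ Finset.mem_Icc.mpr ⟨h1, h2⟩)
  exact ⟨c, hc, hcv⟩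

lemma add_le_ev {c : ℕ × ℕ} (hc : c ∈ μ) : c.1 + c.2 + 1 ≤ ev s.entry c := by
  have hc' := (s.mem_iff_ev_ne_zero).mp hc
  obtain ⟨h0, h⟩ := s.isTableau.ev_add_le (c := (0, 0)) ⟨c.1.zero_le, c.2.zero_le⟩ hc'
  dsimp only at h
  omega

lemma ev_eq_one_iff {c : ℕ × ℕ} (hc : c ∈ μ) : ev s.entry c = 1 ↔ c = (0, 0) := by
  refine ⟨fun h => ?_, ?_⟩
  · have := s.add_le_ev hc
    exact Prod.ext (by omega) (by omega)
  · rintro rfl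
    obtain ⟨d, hd, hd1⟩ := s.exists_ev_eq le_rfl (Finset.card_pos.mpr ⟨_, hc⟩)
    have := s.add_le_ev hd
    obtain rfl : d = (0, 0) := Prod.ext (by omega) (by omega)
    exact hd1

def ofTableau (e : ℕ → ℕ → ℕ) (he : IsTableau e) (hmem : ∀ c, c ∈ μ ↔ ev e c ≠ 0)
    (hle : ∀ c, ev e c ≤ μ.card) (hinj : ∀ c ∈ μ, ∀ d ∈ μ, ev e c = ev e d → c = d) :
    SYT μ where
  entry := e
  mem_iff i j := by rw [hmem (i, j), Nat.one_le_iff_ne_zero]; rfl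
  le_card i j := hle (i, j)
  injOn i j i' j' hm hm' := hinj (i, j) hm (i', j') hm'
  row_lt i j hm := (he (c := (i, j)) (.inr rfl) ((hmem _).mp hm)).2
  col_lt i j hm := (he (c := (i, j)) (.inl rfl) ((hmem _).mp hm)).2

lemma two_le_ev_iff {c : ℕ × ℕ} : 2 ≤ ev s.entry c ↔ c ∈ μ ∧ c ≠ (0, 0) := by
  by_cases hc : c ∈ μ
  · have := (s.mem_iff_ev_ne_zero).mp hc
    rw [ne_eq, ← s.ev_eq_one_iff hc]
    simp only [hc, true_and]
    omega
  · have := (s.mem_iff_ev_ne_zero).not.mp hc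
    simp only [hc, false_and, iff_false]
    omega

lemma eq_of_trunc_eq {ν : YoungDiagram} {s s' : SYT ν}
    (h : trunc (ν.card - 1) s.entry = trunc (ν.card - 1) s'.entry) : s = s' := by
  refine SYT.entry_injective (funext fun i => funext fun j => ?_)
  change ev s.entry (i, j) = ev s'.entry (i, j)
  have hc := congrArg (ev · (i, j)) h
  simp only [ev_trunc] at hc
  by_cases hν : (i, j) ∈ ν
  · have := (s.mem_iff_ev_ne_zero).mp hν
    have := (s'.mem_iff_ev_ne_zero).mp hν
    have := s.ev_le_card (i, j)
    have := s'.ev_le_card (i, j)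
    split_ifs at hc <;> omega
  · rw [s.ev_eq_zero hν, s'.ev_eq_zero hν]

end SYT

namespace JeuDeTaquin

/-! ### The slide of a standard tableau -/

def eraseCorner (ν : YoungDiagram) (b : ℕ × ℕ) (hdown : down b ∉ ν) (hright : right b ∉ ν) :
    YoungDiagram where
  cells := ν.cells.erase b
  isLowerSet := by
    intro a c hca ha
    simp only [Finset.coe_erase, Set.mem_sdiff, Finset.mem_coe, Set.mem_singleton_iff] at ha ⊢
    refine ⟨ν.isLowerSet hca ha.1, ?_⟩
    rintro rfl
    have := hca.1; have := hca.2
    rcases Nat.lt_or_ge c.1 a.1 with h | h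
    · exact hdown (ν.up_left_mem h (hca.2) ha.1)
    · exact hright (ν.up_left_mem hca.1 (show c.2 + 1 ≤ a.2 by
        have : c.2 ≠ a.2 := fun h2 => ha.2 (Prod.ext (by omega) h2.symm); omega) ha.1)

section eraseCorner

variable {ν : YoungDiagram} {b : ℕ × ℕ} {hdown : down b ∉ ν} {hright : right b ∉ ν}

lemma mem_eraseCorner {c : ℕ × ℕ} : c ∈ eraseCorner ν b hdown hright ↔ c ≠ b ∧ c ∈ ν :=
  Finset.mem_erase

lemma eraseCorner_covers (hb : b ∈ ν) : YDcovers (eraseCorner ν b hdown hright) ν :=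
  ⟨Finset.erase_subset _ _, (Finset.card_erase_add_one hb).symm⟩

end eraseCorner

section FiniteSlide

variable {ν : YoungDiagram} (s : SYT ν)

noncomputable def exitIdx : ℕ := Nat.findGreatest (fun k => jdtPathF s.entry k ∈ ν) ν.card

noncomputable def exitCell : ℕ × ℕ := jdtPathF s.entry (exitIdx s)

lemma le_exitIdx {k : ℕ} (h : jdtPathF s.entry k ∈ ν) : k ≤ exitIdx s := by
  refine Nat.le_findGreatest ?_ h
  have := s.add_le_ev h
  have := s.ev_le_card (jdtPathF s.entry k)
  rw [jdtPathF_fst_add_snd] at *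
  omega

lemma notMem_of_isStep_exitCell {d : ℕ × ℕ} (hd : IsStep (exitCell s) d) : d ∉ ν := by
  intro hdν
  have hexit : jdtPathF s.entry (exitIdx s + 1) ∉ ν := fun h => by
    have := le_exitIdx s h; omega
  rw [jdtPathF_succ, s.mem_iff_ev_ne_zero, not_not] at hexit
  exact (ev_jdtStepF_le s.entry hd ((s.mem_iff_ev_ne_zero).mp hdν)).1 hexit

noncomputable def jdtShape : YoungDiagram :=
  eraseCorner ν (exitCell s) (notMem_of_isStep_exitCell s (.inl rfl))
    (notMem_of_isStep_exitCell s (.inr rfl))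

lemma mem_jdtShape {c : ℕ × ℕ} : c ∈ jdtShape s ↔ c ≠ exitCell s ∧ c ∈ ν :=
  mem_eraseCorner

variable (hν : (0, 0) ∈ ν)
include hν

lemma jdtPathF_mem_iff (k : ℕ) : jdtPathF s.entry k ∈ ν ↔ k ≤ exitIdx s := by
  refine ⟨le_exitIdx s, fun hk => ν.isLowerSet (jdtPathF_mono _ hk) ?_⟩
  exact Nat.findGreatest_spec (P := fun k => jdtPathF s.entry k ∈ ν) (Nat.zero_le _) hν

lemma exitCell_mem : exitCell s ∈ ν := (jdtPathF_mem_iff s hν _).mpr le_rfl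

lemma jdtShape_covers : YDcovers (jdtShape s) ν := eraseCorner_covers (exitCell_mem s hν)

lemma jdtSource_mem_iff (c : ℕ × ℕ) :
    jdtSource s.entry c ∈ ν ∧ jdtSource s.entry c ≠ (0, 0) ↔ c ∈ jdtShape s := by
  rw [mem_jdtShape, and_comm (a := c ≠ _)]
  by_cases hc : jdtPathF s.entry (c.1 + c.2) = c
  · have hne : jdtPathF s.entry (c.1 + c.2 + 1) ≠ (0, 0) := fun h0 => by
      have := jdtPathF_fst_add_snd s.entry (c.1 + c.2 + 1)
      rw [h0] at this; omega
    conv_rhs => rw [← hc]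
    rw [jdtSource_of_eq hc, jdtPathF_mem_iff s hν, jdtPathF_mem_iff s hν, exitCell,
      (jdtPathF_injective _).ne_iff]
    simp only [hne, ne_eq, not_false_eq_true, and_true]
    omega
  · rw [jdtSource_of_ne hc]
    refine and_congr_right fun _ => iff_of_true (fun h0 => hc ?_) (fun he => hc ?_)
    · subst h0; rfl
    · rw [he, exitCell, jdtPathF_fst_add_snd]

lemma one_le_ev_jdtF_iff (c : ℕ × ℕ) : 1 ≤ ev (jdtF s.entry) c ↔ c ∈ jdtShape s := by
  rw [ev_jdtF, ← jdtSource_mem_iff s hν, ← s.two_le_ev_iff]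
  omega

lemma ev_jdtSource_lt {c d : ℕ × ℕ} (h : IsStep c d) (hd : d ∈ jdtShape s) :
    ev s.entry (jdtSource s.entry c) < ev s.entry (jdtSource s.entry d) := by
  have hσd := ((jdtSource_mem_iff s hν d).mpr hd).1
  have hdν := ((mem_jdtShape s).mp hd).2
  have hd0 := (s.mem_iff_ev_ne_zero).mp hdν
  have hle := s.isTableau.ev_le_ev_jdtSource d ((s.mem_iff_ev_ne_zero).mp hσd)
  by_cases hc : jdtPathF s.entry (c.1 + c.2) = c
  · rw [jdtSource_of_eq hc, jdtPathF_succ, hc]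
    by_cases hnext : jdtStepF s.entry c = d
    · have hon : jdtPathF s.entry (d.1 + d.2) = d := by
        rw [h.fst_add_snd, jdtPathF_succ, hc, hnext]
      have hstep : IsStep d (jdtSource s.entry d) := by
        rw [jdtSource, if_pos hon]; exact isStep_jdtStepF _ d
      rw [hnext]
      exact (s.isTableau hstep ((s.mem_iff_ev_ne_zero).mp hσd)).2
    -- the path turns away from `d` into the smaller successor of `c`
    · obtain ⟨hne, hmin⟩ := ev_jdtStepF_le s.entry h hd0
      have : ev s.entry (jdtStepF s.entry c) ≠ ev s.entry d := fun heq =>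
        hnext (s.ev_injOn ((s.mem_iff_ev_ne_zero).mpr hne) hdν heq)
      omega
  · rw [jdtSource_of_ne hc]
    have := (s.isTableau h hd0).2
    omega

lemma isTableau_jdtF : IsTableau (jdtF s.entry) := by
  intro c d h hd
  have hdμ := (one_le_ev_jdtF_iff s hν d).mp (Nat.one_le_iff_ne_zero.mpr hd)
  have hcμ : c ∈ jdtShape s := (jdtShape s).isLowerSet h.le hdμ
  have := (s.two_le_ev_iff).mpr ((jdtSource_mem_iff s hν c).mpr hcμ)
  have := ev_jdtSource_lt s hν h hdμ
  rw [ev_jdtF, ev_jdtF] at *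
  omega

noncomputable def jdtSYT : SYT (jdtShape s) :=
  .ofTableau (jdtF s.entry) (isTableau_jdtF s hν)
    (fun c => by rw [← one_le_ev_jdtF_iff s hν, Nat.one_le_iff_ne_zero])
    (fun c => by
      have := s.ev_le_card (jdtSource s.entry c)
      have := (jdtShape_covers s hν).2
      rw [ev_jdtF]
      omega)
    (fun c hc d hd h => by
      have h1 := (jdtSource_mem_iff s hν _).mpr hc
      have h2 := (jdtSource_mem_iff s hν _).mpr hd
      refine jdtSource_injective _ (s.ev_injOn h1.1 h2.1 ?_)
      have := (s.two_le_ev_iff).mpr h1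
      have := (s.two_le_ev_iff).mpr h2
      rw [ev_jdtF, ev_jdtF] at h
      omega)

end FiniteSlide

section Injective

variable {ν : YoungDiagram} {s s' : SYT ν}

/-- At a merge point `q` reached from `a ≠ b` by the paths of `s` and `s'`, the equal slides
would give `s q = s' a < s' q = s b < s q`. -/
lemma jdtPathF_eq_of_succ_eq (h : jdtF s.entry = jdtF s'.entry) {k : ℕ}
    (hq : jdtPathF s.entry (k + 1) = jdtPathF s'.entry (k + 1))
    (hqν : jdtPathF s.entry (k + 1) ∈ ν) :
    jdtPathF s.entry k = jdtPathF s'.entry k := by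
  by_contra hab
  have ha : IsStep (jdtPathF s.entry k) (jdtPathF s.entry (k + 1)) := by
    rw [jdtPathF_succ]; exact isStep_jdtStepF _ _
  have hb : IsStep (jdtPathF s'.entry k) (jdtPathF s.entry (k + 1)) := by
    rw [hq, jdtPathF_succ]; exact isStep_jdtStepF _ _
  have hoff_a : jdtPathF s'.entry ((jdtPathF s.entry k).1 + (jdtPathF s.entry k).2) ≠
      jdtPathF s.entry k := by
    rw [jdtPathF_fst_add_snd]; exact Ne.symm hab
  have hoff_b : jdtPathF s.entry ((jdtPathF s'.entry k).1 + (jdtPathF s'.entry k).2) ≠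
      jdtPathF s'.entry k := by
    rw [jdtPathF_fst_add_snd]; exact hab
  have ea := congrArg (ev · (jdtPathF s.entry k)) h
  have eb := congrArg (ev · (jdtPathF s'.entry k)) h
  simp only [ev_jdtF, jdtSource_jdtPathF, jdtSource_of_ne hoff_a, jdtSource_of_ne hoff_b] at ea eb
  rw [← hq] at eb
  have hs := (s.mem_iff_ev_ne_zero).mp hqν
  have hs' := (s'.mem_iff_ev_ne_zero).mp hqν
  have := s'.isTableau ha hs'
  have := s.isTableau hb hs
  omega

variable (hν : (0, 0) ∈ ν) (h : jdtF s.entry = jdtF s'.entry)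
include hν h

lemma exitCell_eq_of_jdtF_eq : exitCell s = exitCell s' := by
  have hnot : exitCell s ∉ jdtShape s' := by
    rw [← one_le_ev_jdtF_iff s' hν, ← h, one_le_ev_jdtF_iff s hν, mem_jdtShape]
    exact fun h' => h'.1 rfl
  rw [mem_jdtShape] at hnot
  by_contra hne
  exact hnot ⟨hne, exitCell_mem s hν⟩

lemma exitIdx_eq_of_jdtF_eq : exitIdx s = exitIdx s' := by
  have := congrArg (fun c : ℕ × ℕ => c.1 + c.2) (exitCell_eq_of_jdtF_eq hν h)
  simpa only [exitCell, jdtPathF_fst_add_snd] using this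

lemma jdtPathF_eq_of_jdtF_eq {k : ℕ} (hk : k ≤ exitIdx s) :
    jdtPathF s.entry k = jdtPathF s'.entry k := by
  refine Nat.decreasingInduction (motive := fun k _ => jdtPathF s.entry k = jdtPathF s'.entry k)
    (fun k hk ih => jdtPathF_eq_of_succ_eq h ih ((jdtPathF_mem_iff s hν _).mpr hk)) ?_ hk
  have := exitCell_eq_of_jdtF_eq hν h
  rwa [exitCell, exitCell, ← exitIdx_eq_of_jdtF_eq hν h] at this

omit h in
lemma jdtF_injective : Function.Injective fun s : SYT ν => jdtF s.entry := by
  intro s s' (h : jdtF s.entry = jdtF s'.entry)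
  refine SYT.entry_injective (funext fun i => funext fun j => ?_)
  change ev s.entry (i, j) = ev s'.entry (i, j)
  generalize (i, j) = c
  by_cases hcν : c ∈ ν
  swap
  · rw [s.ev_eq_zero hcν, s'.ev_eq_zero hcν]
  have hs := (s.mem_iff_ev_ne_zero).mp hcν
  have hs' := (s'.mem_iff_ev_ne_zero).mp hcν
  by_cases hon : jdtPathF s.entry (c.1 + c.2) = c
  · have hle := (jdtPathF_mem_iff s hν _).mp (hon ▸ hcν)
    rcases hk : c.1 + c.2 with _ | k
    · have hc0 : c = (0, 0) := Prod.ext (by omega) (by omega)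
      rw [(s.ev_eq_one_iff hcν).mpr hc0, (s'.ev_eq_one_iff hcν).mpr hc0]
    · rw [hk] at hon hle
      have hon' : jdtPathF s'.entry (k + 1) = c := by
        rw [← jdtPathF_eq_of_jdtF_eq hν h hle, hon]
      have e := ev_jdtF s.entry (jdtPathF s.entry k)
      have e' := ev_jdtF s'.entry (jdtPathF s'.entry k)
      rw [jdtSource_jdtPathF, hon] at e
      rw [jdtSource_jdtPathF, hon'] at e'
      rw [h, jdtPathF_eq_of_jdtF_eq hν h (by omega), e'] at e
      omega
  · have hon' : jdtPathF s'.entry (c.1 + c.2) ≠ c := fun hon' => by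
      have hle := (jdtPathF_mem_iff s' hν _).mp (hon' ▸ hcν)
      rw [← exitIdx_eq_of_jdtF_eq hν h] at hle
      exact hon ((jdtPathF_eq_of_jdtF_eq hν h hle).trans hon')
    have e := congrArg (ev · c) h
    simp only [ev_jdtF, jdtSource_of_ne hon, jdtSource_of_ne hon'] at e
    omega

end Injective

/-! ### Removing and restoring the largest entry -/

abbrev CoveredSYT (ν : YoungDiagram) : Type := Σ l : {l : YoungDiagram // YDcovers l ν}, SYT l.1

namespace CoveredSYT

variable {ν : YoungDiagram}

lemma entry_injective : Function.Injective fun p : CoveredSYT ν => p.2.entry := by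
  rintro ⟨⟨l, hl⟩, u⟩ ⟨⟨l', hl'⟩, u'⟩ (h : u.entry = u'.entry)
  obtain rfl := u.shape_eq_of_entry_eq h
  obtain rfl := SYT.entry_injective h
  rfl

instance : Finite (CoveredSYT ν) :=
  have : Finite {l : YoungDiagram // YDcovers l ν} :=
    Finite.of_injective (fun l => (⟨l.1.cells, Finset.mem_powerset.mpr l.2.1⟩ : ν.cells.powerset))
      fun _ _ h => Subtype.ext (YoungDiagram.ext (congrArg Subtype.val h))
  inferInstanceAs (Finite (Σ _, _))

end CoveredSYT

lemma YDcovers.eq_of_notMem {l ν : YoungDiagram} (h : YDcovers l ν) {c d : ℕ × ℕ}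
    (hc : c ∈ ν) (hcl : c ∉ l) (hd : d ∈ ν) (hdl : d ∉ l) : c = d := by
  have hcard : (ν.cells \ l.cells).card = 1 := by
    have : ν.cells.card = l.cells.card + 1 := h.2
    rw [Finset.card_sdiff_of_subset h.1]
    omega
  exact Finset.card_le_one.mp hcard.le c (Finset.mem_sdiff.mpr ⟨hc, hcl⟩) d
    (Finset.mem_sdiff.mpr ⟨hd, hdl⟩)

section Removal

variable {ν : YoungDiagram} (s : SYT ν) (hν : 0 < ν.card)

noncomputable def maxCell : ℕ × ℕ := (s.exists_ev_eq hν le_rfl).choose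

lemma maxCell_mem : maxCell s hν ∈ ν := (s.exists_ev_eq hν le_rfl).choose_spec.1

lemma ev_maxCell : ev s.entry (maxCell s hν) = ν.card := (s.exists_ev_eq hν le_rfl).choose_spec.2

lemma notMem_of_isStep_maxCell {d : ℕ × ℕ} (hd : IsStep (maxCell s hν) d) : d ∉ ν := fun hdν => by
  have := (s.isTableau hd ((s.mem_iff_ev_ne_zero).mp hdν)).2
  have := s.ev_le_card d
  rw [ev_maxCell] at *
  omega

noncomputable def remShape : YoungDiagram :=
  eraseCorner ν (maxCell s hν) (notMem_of_isStep_maxCell s hν (.inl rfl))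
    (notMem_of_isStep_maxCell s hν (.inr rfl))

lemma remShape_covers : YDcovers (remShape s hν) ν := eraseCorner_covers (maxCell_mem s hν)

lemma mem_remShape (c : ℕ × ℕ) :
    c ∈ remShape s hν ↔ ev (trunc (ν.card - 1) s.entry) c ≠ 0 := by
  rw [remShape, mem_eraseCorner, ev_trunc]
  by_cases hc : c ∈ ν
  · have h0 := (s.mem_iff_ev_ne_zero).mp hc
    have hle := s.ev_le_card c
    have hmax : c = maxCell s hν ↔ ev s.entry c = ν.card := by
      rw [← ev_maxCell s hν]
      exact ⟨fun h => h ▸ rfl, s.ev_injOn hc (maxCell_mem s hν)⟩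
    rw [ne_eq, hmax]
    split_ifs <;> simp only [hc, and_true] <;> omega
  · simp [hc, s.ev_eq_zero hc]

noncomputable def remSYT : SYT (remShape s hν) :=
  .ofTableau (trunc (ν.card - 1) s.entry) (s.isTableau.trunc _) (mem_remShape s hν)
    (fun c => by
      have := (remShape_covers s hν).2
      rw [ev_trunc]
      split_ifs <;> omega)
    (fun c hc d hd h => by
      rw [mem_remShape] at hc hd
      rw [ev_trunc_of_ne_zero hc, ev_trunc_of_ne_zero hd] at h
      rw [ev_trunc_of_ne_zero hc] at hc
      rw [ev_trunc_of_ne_zero hd] at hd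
      exact s.ev_injOn ((s.mem_iff_ev_ne_zero).mpr hc) ((s.mem_iff_ev_ne_zero).mpr hd) h)

end Removal

section Extension

def extEntry {l : YoungDiagram} (u : SYT l) (ν : YoungDiagram) : ℕ → ℕ → ℕ := fun i j =>
  if (i, j) ∈ ν ∧ (i, j) ∉ l then l.card + 1 else u.entry i j

variable {l ν : YoungDiagram} (u : SYT l) (hl : YDcovers l ν)

lemma ev_extEntry (c : ℕ × ℕ) :
    ev (extEntry u ν) c = if c ∈ ν ∧ c ∉ l then l.card + 1 else ev u.entry c := rfl

include hl

lemma isTableau_extEntry : IsTableau (extEntry u ν) := by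
  intro c d h hd
  have hu := u.ev_le_card c
  by_cases hnew : d ∈ ν ∧ d ∉ l
  · have hcν : c ∈ ν := ν.isLowerSet h.le hnew.1
    have hcl : c ∈ l := by
      by_contra hcl
      exact h.ne (hl.eq_of_notMem hcν hcl hnew.1 hnew.2)
    rw [ev_extEntry, ev_extEntry, if_pos hnew, if_neg fun hc => hc.2 hcl]
    have := (u.mem_iff_ev_ne_zero).mp hcl
    omega
  · rw [ev_extEntry u d, if_neg hnew] at hd ⊢
    have hdl := (u.mem_iff_ev_ne_zero).mpr hd
    have hcl : c ∈ l := l.isLowerSet h.le hdl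
    rw [ev_extEntry, if_neg fun hc => hc.2 hcl]
    exact u.isTableau h hd

def extSYT : SYT ν :=
  .ofTableau (extEntry u ν) (isTableau_extEntry u hl)
    (fun c => by
      rw [ev_extEntry]
      split_ifs with hnew
      · simp [hnew.1]
      · rw [← u.mem_iff_ev_ne_zero]
        exact ⟨fun hc => by by_contra hcl; exact hnew ⟨hc, hcl⟩, fun hc => hl.1 hc⟩)
    (fun c => by
      have := u.ev_le_card c
      rw [ev_extEntry, hl.2]
      split_ifs <;> omega)
    (fun c hc d hd h => by
      have := u.ev_le_card c
      have := u.ev_le_card d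
      rw [ev_extEntry, ev_extEntry] at h
      split_ifs at h with hc' hd' hd'
      · exact hl.eq_of_notMem hc hc'.2 hd hd'.2
      · omega
      · omega
      · have hcl : c ∈ l := by by_contra hcl; exact hc' ⟨hc, hcl⟩
        have hdl : d ∈ l := by by_contra hdl; exact hd' ⟨hd, hdl⟩
        exact u.ev_injOn hcl hdl h)

lemma trunc_extSYT : trunc l.card (extSYT u hl).entry = u.entry := by
  funext i j
  change ev (trunc l.card (extEntry u ν)) (i, j) = ev u.entry (i, j)
  have := u.ev_le_card (i, j)
  rw [ev_trunc, ev_extEntry]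
  split_ifs with hnew <;> first | rfl | omega | exact (u.ev_eq_zero hnew.2).symm

end Extension

lemma origin_mem_of_card_pos {ν : YoungDiagram} (hν : 0 < ν.card) : (0, 0) ∈ ν := by
  obtain ⟨c, hc⟩ := Finset.card_pos.mp hν
  exact ν.isLowerSet ⟨c.1.zero_le, c.2.zero_le⟩ hc

section Equiv

variable {ν : YoungDiagram} (hν : 0 < ν.card)

noncomputable def remEquiv : SYT ν ≃ CoveredSYT ν :=
  Equiv.ofBijective (fun s => ⟨⟨remShape s hν, remShape_covers s hν⟩, remSYT s hν⟩)
    ⟨fun _ _ h => SYT.eq_of_trunc_eq (congrArg (fun p : CoveredSYT ν => p.2.entry) h),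
      fun ⟨⟨l, hl⟩, u⟩ => ⟨extSYT u hl, CoveredSYT.entry_injective <| by
        change trunc (ν.card - 1) (extSYT u hl).entry = u.entry
        rw [hl.2, Nat.add_sub_cancel, trunc_extSYT]⟩⟩

noncomputable def jdtCovered (s : SYT ν) : CoveredSYT ν :=
  ⟨⟨jdtShape s, jdtShape_covers s (origin_mem_of_card_pos hν)⟩,
    jdtSYT s (origin_mem_of_card_pos hν)⟩

lemma jdtCovered_injective : Function.Injective (jdtCovered hν) := fun _ _ h =>
  jdtF_injective (origin_mem_of_card_pos hν) (congrArg (fun p : CoveredSYT ν => p.2.entry) h)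

/-- The slide is an injection of `SYT ν` into `CoveredSYT ν`, a finite set which `remEquiv`
puts in bijection with `SYT ν`; so it is a bijection too. -/
noncomputable def jdtEquiv : SYT ν ≃ SYT ν :=
  Equiv.ofBijective ((remEquiv hν).symm ∘ jdtCovered hν)
    (Finite.injective_iff_bijective.mp
      ((remEquiv hν).symm.injective.comp (jdtCovered_injective hν)))

lemma trunc_jdtEquiv (s : SYT ν) :
    trunc (ν.card - 1) (jdtEquiv hν s).entry = jdtF s.entry :=
  congrArg (fun p : CoveredSYT ν => p.2.entry) ((remEquiv hν).apply_symm_apply (jdtCovered hν s))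

end Equiv

abbrev SYTOfSize (N : ℕ) : Type := Σ μ : {μ : YoungDiagram // μ.card = N}, SYT μ.1

instance (N : ℕ) : Countable (SYTOfSize N) := inferInstanceAs (Countable (Σ _, _))

lemma SYTOfSize.entry_injective {N : ℕ} : Function.Injective fun x : SYTOfSize N => x.2.entry := by
  rintro ⟨⟨μ, hμ⟩, s⟩ ⟨⟨μ', hμ'⟩, s'⟩ (h : s.entry = s'.entry)
  obtain rfl := s.shape_eq_of_entry_eq h
  obtain rfl := SYT.entry_injective h
  rfl

noncomputable def jdtEquivOfSize (N : ℕ) : SYTOfSize (N + 1) ≃ SYTOfSize (N + 1) :=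
  Equiv.sigmaCongrRight fun μ => jdtEquiv (μ.2.symm ▸ N.succ_pos)

lemma trunc_jdtEquivOfSize {N : ℕ} (x : SYTOfSize (N + 1)) :
    trunc N (jdtEquivOfSize N x).2.entry = jdtF x.2.entry := by
  have := trunc_jdtEquiv (x.1.2.symm ▸ N.succ_pos) x.2
  rwa [show x.1.1.card - 1 = N by rw [x.1.2]; rfl] at this

/-! ### Infinite tableaux -/

namespace IsInfYT

variable {t : ℕ → ℕ → ℕ} (ht : IsInfYT t)
include ht

lemma ev_ne_zero (c : ℕ × ℕ) : ev t c ≠ 0 := Nat.one_le_iff_ne_zero.mp (ht.1 c.1 c.2)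

lemma isTableau : IsTableau t := by
  rintro c _ (rfl | rfl) -
  exacts [⟨ht.ev_ne_zero c, ht.2.2.2 c.1 c.2⟩, ⟨ht.ev_ne_zero c, ht.2.2.1 c.1 c.2⟩]

lemma ev_injective : Function.Injective (ev t) := fun c _ h =>
  (ht.2.1 _ (ht.1 c.1 c.2)).unique rfl h.symm

lemma ev_invFun {v : ℕ} (hv : 1 ≤ v) : ev t (Function.invFun (ev t) v) = v :=
  Function.invFun_eq (ht.2.1 v hv).exists

noncomputable def shape (ht : IsInfYT t) (N : ℕ) : YoungDiagram where
  cells := (Finset.Icc 1 N).image (Function.invFun (ev t))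
  isLowerSet c c' hc' hc := by
    obtain ⟨v, hv, rfl⟩ := Finset.mem_image.mp hc
    have hv := Finset.mem_Icc.mp hv
    have hle := (ht.isTableau.ev_add_le hc' (ht.ev_ne_zero _)).2
    rw [ht.ev_invFun hv.1] at hle
    refine Finset.mem_image.mpr ⟨ev t c', Finset.mem_Icc.mpr ⟨ht.1 c'.1 c'.2, by omega⟩, ?_⟩
    exact Function.leftInverse_invFun ht.ev_injective c'

lemma mem_shape {N : ℕ} {c : ℕ × ℕ} : c ∈ ht.shape N ↔ ev t c ≤ N := by
  refine ⟨fun hc => ?_, fun hc => Finset.mem_image.mpr ⟨ev t c,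
    Finset.mem_Icc.mpr ⟨ht.1 c.1 c.2, hc⟩, Function.leftInverse_invFun ht.ev_injective c⟩⟩
  obtain ⟨v, hv, rfl⟩ := Finset.mem_image.mp hc
  rw [ht.ev_invFun (Finset.mem_Icc.mp hv).1]
  exact (Finset.mem_Icc.mp hv).2

lemma card_shape (N : ℕ) : (ht.shape N).card = N := by
  refine (Finset.card_image_of_injOn fun v hv w hw h => ?_).trans (Nat.card_Icc 1 N)
  rw [← ht.ev_invFun (Finset.mem_Icc.mp hv).1, ← ht.ev_invFun (Finset.mem_Icc.mp hw).1]
  exact congrArg (ev t) h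

lemma ev_trunc_ne_zero_iff {N : ℕ} {c : ℕ × ℕ} : ev (trunc N t) c ≠ 0 ↔ ev t c ≤ N := by
  have := ht.ev_ne_zero c
  rw [ev_trunc]
  split_ifs <;> omega

noncomputable def restrict (ht : IsInfYT t) (N : ℕ) : SYT (ht.shape N) :=
  .ofTableau (trunc N t) (ht.isTableau.trunc N)
    (fun c => by rw [mem_shape, ht.ev_trunc_ne_zero_iff])
    (fun c => by rw [card_shape, ev_trunc]; split_ifs <;> omega)
    (fun c hc d hd h => by
      rw [mem_shape, ← ht.ev_trunc_ne_zero_iff] at hc hd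
      rw [ev_trunc_of_ne_zero hc, ev_trunc_of_ne_zero hd] at h
      exact ht.ev_injective h)

lemma mem_cylEvent_iff {μ : YoungDiagram} (s : SYT μ) :
    t ∈ cylEvent μ s ↔ trunc μ.card t = s.entry := by
  refine ⟨fun hcyl => funext fun i => funext fun j => ?_, fun h i j hc => ?_⟩
  · change ev (trunc μ.card t) (i, j) = ev s.entry (i, j)
    have hcyl' : ∀ c ∈ μ, ev t c = ev s.entry c := fun c hc => hcyl c.1 c.2 hc
    by_cases hc : (i, j) ∈ μ
    · rw [ev_trunc, if_pos (hcyl' _ hc ▸ s.ev_le_card _), hcyl' _ hc]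
    · rw [s.ev_eq_zero hc, ev_trunc, if_neg fun hle => hc ?_]
      obtain ⟨d, hd, hdv⟩ := s.exists_ev_eq (ht.1 i j) hle
      have hdc : ev t d = ev t (i, j) := (hcyl' d hd).trans hdv
      rwa [← ht.ev_injective hdc]
  · have hne := (s.mem_iff_ev_ne_zero).mp hc
    have := congrArg (ev · (i, j)) h
    change ev t (i, j) = ev s.entry (i, j)
    rw [← this] at hne ⊢
    exact (ev_trunc_of_ne_zero hne).symm

lemma mem_cylEvent_iff_trunc {N : ℕ} (x : SYTOfSize N) :
    t ∈ cylEvent x.1.1 x.2 ↔ trunc N t = x.2.entry := by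
  rw [ht.mem_cylEvent_iff, x.1.2]

lemma exists_trunc_eq (N : ℕ) : ∃ x : SYTOfSize N, trunc N t = x.2.entry :=
  ⟨⟨⟨ht.shape N, ht.card_shape N⟩, ht.restrict N⟩, rfl⟩

end IsInfYT

/-! ### Measurability -/

section Measurability

lemma measurable_comp_of_countable {α β γ : Type*} [MeasurableSpace α] [MeasurableSpace β]
    [Countable β] [MeasurableSingletonClass β] [MeasurableSpace γ] {g : α → β → γ}
    (hg : ∀ b, Measurable fun a => g a b) {f : α → β} (hf : Measurable f) :
    Measurable fun a => g a (f a) :=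
  (measurable_from_prod_countable_left (f := fun p : α × β => g p.1 p.2) hg).comp
    (measurable_id.prodMk hf)

lemma measurable_jdtStepF (c : ℕ × ℕ) : Measurable fun t : ℕ → ℕ → ℕ => jdtStepF t c :=
  Measurable.ite (measurableSet_setOfPred.mpr (by fun_prop)) measurable_const measurable_const

lemma measurable_jdtPathF (k : ℕ) : Measurable fun t : ℕ → ℕ → ℕ => jdtPathF t k := by
  induction k with
  | zero => exact measurable_const
  | succ k ih =>
    simp_rw [jdtPathF_succ]
    exact measurable_comp_of_countable measurable_jdtStepF ih

lemma measurable_jdtSource (c : ℕ × ℕ) : Measurable fun t : ℕ → ℕ → ℕ => jdtSource t c :=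
  Measurable.ite (measurable_jdtPathF _ (measurableSet_singleton c)) (measurable_jdtStepF c)
    measurable_const

lemma measurable_jdtF : Measurable jdtF := by
  refine measurable_pi_lambda _ fun i => measurable_pi_lambda _ fun j => ?_
  have h := measurable_comp_of_countable (g := fun (t : ℕ → ℕ → ℕ) c => ev t c - 1)
    (fun c => by unfold ev; fun_prop) (measurable_jdtSource (i, j))
  simp only [← ev_jdtF] at h
  exact h

lemma measurable_trunc (N : ℕ) : Measurable (trunc N) :=
  measurable_pi_lambda _ fun i => measurable_pi_lambda _ fun j =>
    (measurable_of_countable fun v : ℕ => if v ≤ N then v else 0).comp (by fun_prop)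

lemma measurableSet_isInfYT : MeasurableSet {t | IsInfYT t} := by
  simp only [IsInfYT, ExistsUnique, measurableSet_setOfPred]
  fun_prop

lemma measurableSet_cylEvent (μ : YoungDiagram) (s : SYT μ) : MeasurableSet (cylEvent μ s) := by
  simp only [cylEvent, measurableSet_setOfPred]
  fun_prop

lemma monotone_comap_trunc : Monotone fun N =>
    {s | MeasurableSet[MeasurableSpace.comap (trunc N) inferInstance] s} := fun N M hNM s hs => by
  have : trunc N = trunc N ∘ trunc M := funext fun t => (trunc_trunc hNM t).symm
  rw [Set.mem_ofPred_eq, this, ← MeasurableSpace.comap_comp] at hs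
  exact MeasurableSpace.comap_mono (measurable_trunc N).comap_le s hs

/-- The σ-algebra of `ℕ → ℕ → ℕ` is generated by the truncations, since
`t i j = v ↔ ∀ K, trunc (K + v) t i j = v`. -/
lemma iSup_comap_trunc :
    ⨆ N, MeasurableSpace.comap (trunc N) inferInstance =
      (inferInstance : MeasurableSpace (ℕ → ℕ → ℕ)) := by
  refine le_antisymm (iSup_le fun N => (measurable_trunc N).comap_le) ?_
  have hcoord : ∀ i j v : ℕ, MeasurableSet {e : ℕ → ℕ → ℕ | e i j = v} := fun i j v =>
    measurableSet_setOfPred.mpr (by fun_prop)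
  have hpreimage : ∀ i j v : ℕ, (fun t : ℕ → ℕ → ℕ => t i j) ⁻¹' {v} =
      ⋂ K, trunc (K + v) ⁻¹' {e | e i j = v} := fun i j v => by
    ext t
    simp only [Set.mem_preimage, Set.mem_singleton_iff, Set.mem_iInter, Set.mem_ofPred_eq, trunc]
    refine ⟨fun h K => by rw [if_pos (by omega), h], fun h => ?_⟩
    have := h (t i j)
    split_ifs at this <;> omega
  have hid : @Measurable _ _ (⨆ N, MeasurableSpace.comap (trunc N) inferInstance) _
      (id : (ℕ → ℕ → ℕ) → ℕ → ℕ → ℕ) :=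
    (@measurable_pi_iff _ _ _ (⨆ N, MeasurableSpace.comap (trunc N) inferInstance) _ _).mpr
      fun i => (@measurable_pi_iff _ _ _ (⨆ N, MeasurableSpace.comap (trunc N) inferInstance)
        _ _).mpr fun j => @measurable_to_countable' _ _ _ _
          (⨆ N, MeasurableSpace.comap (trunc N) inferInstance) (fun t => t i j) fun v => by
        rw [hpreimage]
        exact MeasurableSet.iInter fun K => le_iSup
          (fun N => MeasurableSpace.comap (trunc N) inferInstance) (K + v) _ ⟨_, hcoord i j v, rfl⟩
  simpa only [MeasurableSpace.comap_id] using hid.comap_le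

def truncEvents : Set (Set (ℕ → ℕ → ℕ)) :=
  ⋃ N, {s | MeasurableSet[MeasurableSpace.comap (trunc N) inferInstance] s}

lemma isPiSystem_truncEvents : IsPiSystem truncEvents :=
  isPiSystem_iUnion_of_monotone _
    (fun N => @MeasurableSpace.isPiSystem_measurableSet _ (MeasurableSpace.comap (trunc N) _))
    monotone_comap_trunc

lemma generateFrom_truncEvents :
    (inferInstance : MeasurableSpace (ℕ → ℕ → ℕ)) = MeasurableSpace.generateFrom truncEvents :=
  ((MeasurableSpace.generateFrom_iUnion_measurableSet _).trans iSup_comap_trunc).symm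

end Measurability

/-! ### The Plancherel measure -/

namespace PlancherelLike

variable {P : Measure (ℕ → ℕ → ℕ)} (hP : PlancherelLike P)
include hP

lemma ae_isInfYT : ∀ᵐ t ∂P, IsInfYT t :=
  have := hP.1
  ae_iff.mpr ((prob_compl_eq_zero_iff measurableSet_isInfYT).mpr hP.2.1)

lemma measure_not_isInfYT : P {t | ¬IsInfYT t} = 0 := ae_iff.mp hP.ae_isInfYT

open scoped Classical in
lemma measure_eq_tsum {B : Set (ℕ → ℕ → ℕ)} (hB : MeasurableSet B) (N : ℕ)
    (φ : SYTOfSize N → Prop)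
    (hφ : ∀ x t, IsInfYT t → trunc N t = x.2.entry → (t ∈ B ↔ φ x)) :
    P B = ∑' x : SYTOfSize N, if φ x then P (cylEvent x.1.1 x.2) else 0 := by
  have hcover : B =ᵐ[P] ⋃ x : SYTOfSize N, B ∩ cylEvent x.1.1 x.2 := by
    refine Filter.eventuallyEq_set.mpr ?_
    filter_upwards [hP.ae_isInfYT] with t ht
    obtain ⟨x, hx⟩ := ht.exists_trunc_eq N
    simp only [Set.mem_iUnion, Set.mem_inter_iff]
    exact ⟨fun htB => ⟨x, htB, (ht.mem_cylEvent_iff_trunc x).mpr hx⟩, fun ⟨_, htB, _⟩ => htB⟩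
  have hdisj : Pairwise
      (Function.onFun (AEDisjoint P) fun x : SYTOfSize N => B ∩ cylEvent x.1.1 x.2) := by
    refine fun x y hxy => measure_mono_null (fun t ht (ht' : IsInfYT t) => hxy ?_)
      hP.measure_not_isInfYT
    exact SYTOfSize.entry_injective (((ht'.mem_cylEvent_iff_trunc x).mp ht.1.2).symm.trans
      ((ht'.mem_cylEvent_iff_trunc y).mp ht.2.2))
  have hpiece (x : SYTOfSize N) :
      P (B ∩ cylEvent x.1.1 x.2) = if φ x then P (cylEvent x.1.1 x.2) else 0 := by
    split_ifs with hx
    · refine measure_congr (Filter.eventuallyEq_set.mpr ?_)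
      filter_upwards [hP.ae_isInfYT] with t ht
      simp only [Set.mem_inter_iff, and_iff_right_iff_imp]
      exact fun hcyl => (hφ x t ht ((ht.mem_cylEvent_iff_trunc x).mp hcyl)).mpr hx
    · refine measure_mono_null (t := {t | ¬IsInfYT t})
        (fun t ⟨htB, hcyl⟩ (ht : IsInfYT t) => hx ?_) hP.measure_not_isInfYT
      exact (hφ x t ht ((ht.mem_cylEvent_iff_trunc x).mp hcyl)).mp htB
  rw [measure_congr hcover, measure_iUnion₀ hdisj fun x =>
    (hB.inter (measurableSet_cylEvent _ _)).nullMeasurableSet]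
  exact tsum_congr hpiece

open scoped Classical in
lemma measure_preimage_trunc {A : Set (ℕ → ℕ → ℕ)} (hA : MeasurableSet A) (N : ℕ) :
    P (trunc N ⁻¹' A) = ∑' x : SYTOfSize (N + 1),
      if trunc N x.2.entry ∈ A then P (cylEvent x.1.1 x.2) else 0 :=
  hP.measure_eq_tsum (measurable_trunc N hA) (N + 1) _ fun x t _ hx => by
    rw [Set.mem_preimage, ← trunc_trunc N.le_succ t, hx]

open scoped Classical in
lemma measure_preimage_jdtF_trunc {A : Set (ℕ → ℕ → ℕ)} (hA : MeasurableSet A) (N : ℕ) :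
    P (jdtF ⁻¹' (trunc N ⁻¹' A)) = ∑' x : SYTOfSize (N + 1),
      if jdtF x.2.entry ∈ A then P (cylEvent x.1.1 x.2) else 0 :=
  hP.measure_eq_tsum (measurable_jdtF (measurable_trunc N hA)) (N + 1) _ fun x t ht hx => by
    rw [Set.mem_preimage, Set.mem_preimage, trunc_jdtF ht.isTableau ht.ev_ne_zero, hx]

lemma measure_preimage_jdtF_trunc_eq {A : Set (ℕ → ℕ → ℕ)} (hA : MeasurableSet A) (N : ℕ) :
    P (jdtF ⁻¹' (trunc N ⁻¹' A)) = P (trunc N ⁻¹' A) := by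
  rw [hP.measure_preimage_jdtF_trunc hA, hP.measure_preimage_trunc hA]
  conv_rhs => rw [← (jdtEquivOfSize N).tsum_eq]
  refine tsum_congr fun x => ?_
  rw [trunc_jdtEquivOfSize, hP.2.2, hP.2.2]
  rfl

theorem measurePreserving_jdtF : MeasurePreserving jdtF P P := by
  have := hP.1
  refine ⟨measurable_jdtF, ext_of_generate_finite truncEvents generateFrom_truncEvents
    isPiSystem_truncEvents (fun s hs => ?_) (by simp [Measure.map_apply measurable_jdtF])⟩
  obtain ⟨N, hs⟩ := Set.mem_iUnion.mp hs
  obtain ⟨A, hA, rfl⟩ := MeasurableSpace.measurableSet_comap.mp hs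
  rw [Measure.map_apply measurable_jdtF (measurable_trunc N hA)]
  exact hP.measure_preimage_jdtF_trunc_eq hA N

end PlancherelLike

end JeuDeTaquin

/-- The jeu de taquin map preserves the Plancherel measure of infinite
order. -/
theorem jdt_measure_preserving (P : Measure (ℕ → ℕ → ℕ)) (hP : PlancherelLike P)
    (E : Set (ℕ → ℕ → ℕ)) (hE : MeasurableSet E) :
    P (jdtF ⁻¹' E) = P E :=
  hP.measurePreserving_jdtF.measure_preimage hE.nullMeasurableSet
end

section
/- Let λ ⊢ n be a Young diagram with boxes at positions (i₁,j₁),...,(iₙ,jₙ) and let u_ℓ = i_ℓ − j_ℓ be the contents of the boxes. Then for every symmetric polynomial P in n variables, the element P(X₁,...,Xₙ) of the group algebra ℂ(Sₙ) formed from the Jucys–Murphy elements X_i = (1,i)+(2,i)+...+(i−1,i) lies in the center of ℂ(Sₙ), and acts in the irreducible representation of Sₙ corresponding to λ as the scalar P(u₁,...,uₙ). -/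
/-- The row index of the cell numbered `m` (0-indexed, reading the diagram row by row). -/
noncomputable def rowOf (μ : YoungDiagram) (m : ℕ) : ℕ :=
  sSup { i : ℕ | ∑ i' ∈ Finset.range i, μ.rowLen i' ≤ m }

/-- The column index of the cell numbered `m`. -/
noncomputable def colOf (μ : YoungDiagram) (m : ℕ) : ℕ :=
  m - ∑ i' ∈ Finset.range (rowOf μ m), μ.rowLen i'

/-- The content (column minus row) of the cell numbered `m`. -/
noncomputable def contentOf (μ : YoungDiagram) (m : ℕ) : ℤ :=
  (colOf μ m : ℤ) - (rowOf μ m : ℤ)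

open scoped Classical in
/-- The row symmetrizer: the sum of the permutations preserving each row of the canonical
filling of `μ`. -/
noncomputable def rowSym (n : ℕ) (μ : YoungDiagram) :
    MonoidAlgebra ℂ (Equiv.Perm (Fin n)) :=
  ∑ σ ∈ Finset.univ.filter (fun σ : Equiv.Perm (Fin n) =>
      ∀ m : Fin n, rowOf μ (σ m) = rowOf μ m),
    MonoidAlgebra.single σ 1

open scoped Classical in
/-- The signed column symmetrizer of `μ`. -/
noncomputable def colSym (n : ℕ) (μ : YoungDiagram) :
    MonoidAlgebra ℂ (Equiv.Perm (Fin n)) :=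
  ∑ σ ∈ Finset.univ.filter (fun σ : Equiv.Perm (Fin n) =>
      ∀ m : Fin n, colOf μ (σ m) = colOf μ m),
    MonoidAlgebra.single σ ((Equiv.Perm.sign σ : ℤ) : ℂ)

/-- The Young symmetrizer of `μ`; the left ideal it generates realises the irreducible
representation of the symmetric group corresponding to `μ`. -/
noncomputable def youngSym (n : ℕ) (μ : YoungDiagram) :
    MonoidAlgebra ℂ (Equiv.Perm (Fin n)) :=
  rowSym n μ * colSym n μ

open scoped Classical in
/-- The Jucys–Murphy element `X_i = Σ_{j<i} (j, i)`. -/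
noncomputable def JM (n : ℕ) (i : Fin n) : MonoidAlgebra ℂ (Equiv.Perm (Fin n)) :=
  ∑ j ∈ Finset.univ.filter (fun j : Fin n => j < i),
    MonoidAlgebra.single (Equiv.swap j i) (1 : ℂ)

/-- The abelianization map sending a noncommutative polynomial to the corresponding
commutative polynomial. -/
noncomputable def abelPoly (n : ℕ) : FreeAlgebra ℂ (Fin n) →ₐ[ℂ] MvPolynomial (Fin n) ℂ :=
  FreeAlgebra.lift ℂ (fun i => MvPolynomial.X i)

/-!
Write `a` and `b` for the row symmetrizer and the signed column symmetrizer of the row-reading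
tableau of `μ`, so that `youngSym = a * b`. For the cell `k` in row `r` and column `c`, the
transpositions `(j k)` with `j < k` in row `r` are absorbed by `a`, which gives `c`. For an earlier
row `i < r`, multiplying `1 + Σ_{j in row i} (j k)` by the symmetrizer of row `i` gives the
symmetrizer `T` of row `i` together with `k`, and `T g b = 0` for every row-preserving `g`: the
cell `j` of row `i` in the column of `g⁻¹ k` gives a transposition `(g j, k)` that `T` absorbs
and that `g` conjugates into the column transposition `(j, g⁻¹ k)`, which `b` turns into a sign.
So each earlier row contributes `-1`, and `X_k a b = (c - r) a b`.

The Jucys–Murphy elements commute, and for `s = (x, x+1)` one has `s X_x = X_{x+1} s - 1`. So `s`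
commutes with `X_x + X_{x+1}`, with `X_x X_{x+1}` and with every other `X_j`. These generate all
polynomials that are invariant under swapping `x` and `x+1`. Hence a symmetric polynomial in the
`X_k` commutes with the adjacent transpositions, which generate the symmetric group. Being
central, it acts on the whole left ideal generated by `a b` by the same scalar.
-/

namespace YoungDiagram

open Finset

variable (μ : YoungDiagram)

/-- The cell `(i, c)` is the cell numbered `μ.rowStart i + c` by `rowOf` and `colOf`. -/
def rowStart (i : ℕ) : ℕ := ∑ i' ∈ range i, μ.rowLen i'

variable {μ}

theorem rowStart_succ (i : ℕ) : μ.rowStart (i + 1) = μ.rowStart i + μ.rowLen i :=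
  sum_range_succ _ _

theorem rowStart_mono : Monotone μ.rowStart := fun _ _ h =>
  sum_le_sum_of_subset (range_subset_range.2 h)

theorem rowStart_eq_card {i : ℕ} (hi : μ.colLen 0 ≤ i) : μ.rowStart i = μ.card := by
  classical
  have hrows : Set.MapsTo Prod.fst (μ.cells : Set (ℕ × ℕ)) (range i : Set ℕ) := by
    rintro ⟨a, b⟩ hab
    have : (a, 0) ∈ μ := μ.up_left_mem le_rfl (Nat.zero_le b) hab
    simpa using (mem_iff_lt_colLen.1 this).trans_le hi
  rw [YoungDiagram.card, card_eq_sum_card_fiberwise hrows]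
  exact sum_congr rfl fun i' _ => rowLen_eq_card μ

theorem rowStart_le_card (i : ℕ) : μ.rowStart i ≤ μ.card :=
  (rowStart_mono (le_max_left i (μ.colLen 0))).trans_eq (rowStart_eq_card (le_max_right _ _))

theorem le_rowOf_iff {m : ℕ} (hm : m < μ.card) (i : ℕ) :
    i ≤ rowOf μ m ↔ μ.rowStart i ≤ m := by
  have hbdd : BddAbove {i | μ.rowStart i ≤ m} := ⟨μ.colLen 0, fun i hi => by
    by_contra! h
    exact absurd (rowStart_eq_card h.le ▸ hi : μ.card ≤ m) (not_le.2 hm)⟩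
  have hmem : μ.rowStart (rowOf μ m) ≤ m := Nat.sSup_mem ⟨0, by simp [rowStart]⟩ hbdd
  exact ⟨fun h => (rowStart_mono h).trans hmem, fun h => le_csSup hbdd h⟩

theorem rowOf_lt_iff {m : ℕ} (hm : m < μ.card) (i : ℕ) :
    rowOf μ m < i ↔ m < μ.rowStart i := by
  simpa only [not_le] using (le_rowOf_iff hm i).not

theorem rowStart_rowOf_le {m : ℕ} (hm : m < μ.card) : μ.rowStart (rowOf μ m) ≤ m :=
  (le_rowOf_iff hm _).1 le_rfl

theorem colOf_lt_rowLen {m : ℕ} (hm : m < μ.card) : colOf μ m < μ.rowLen (rowOf μ m) := by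
  have := (rowOf_lt_iff hm (rowOf μ m + 1)).1 (Nat.lt_succ_self _)
  rw [rowStart_succ] at this
  exact Nat.sub_lt_left_of_lt_add (rowStart_rowOf_le hm) this

theorem rowOf_mono {m m' : ℕ} (h : m ≤ m') (hm' : m' < μ.card) : rowOf μ m ≤ rowOf μ m' :=
  (le_rowOf_iff hm' _).2 ((rowStart_rowOf_le (h.trans_lt hm')).trans h)

theorem rowStart_add_lt_card {i c : ℕ} (hc : c < μ.rowLen i) : μ.rowStart i + c < μ.card :=
  ((rowStart_succ i).symm ▸ Nat.add_lt_add_left hc _).trans_le (rowStart_le_card _)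

theorem rowOf_rowStart_add {i c : ℕ} (hc : c < μ.rowLen i) :
    rowOf μ (μ.rowStart i + c) = i := by
  have hm := rowStart_add_lt_card hc
  refine le_antisymm (Nat.lt_succ_iff.1 ((rowOf_lt_iff hm _).2 ?_))
    ((le_rowOf_iff hm _).2 (by omega))
  rw [rowStart_succ]
  omega

theorem colOf_rowStart_add {i c : ℕ} (hc : c < μ.rowLen i) :
    colOf μ (μ.rowStart i + c) = c := by
  rw [colOf, ← rowStart, rowOf_rowStart_add hc]
  omega

end YoungDiagram

namespace Equiv.Perm

variable {α β : Type*}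

def fiberPreserving (f : α → β) : Subgroup (Perm α) where
  carrier := {σ | ∀ a, f (σ a) = f a}
  mul_mem' hσ hτ a := (hσ _).trans (hτ a)
  one_mem' _ := rfl
  inv_mem' {σ} hσ a := by simpa using (hσ (σ⁻¹ a)).symm

theorem apply_mem_of_mem_fixingSubgroup_compl {s : Set α} {σ : Perm α}
    (hσ : σ ∈ fixingSubgroup (Perm α) sᶜ) {a : α} (ha : a ∈ s) : σ a ∈ s := by
  by_contra h
  have hfix : σ a = a := σ.injective ((mem_fixingSubgroup_iff _).1 hσ _ h)
  exact h (by rwa [hfix])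

theorem fixingSubgroup_compl_le_fiberPreserving {f : α → β} {s : Set α}
    (hs : ∀ a ∈ s, ∀ b ∈ s, f a = f b) :
    fixingSubgroup (Perm α) sᶜ ≤ fiberPreserving f :=
  fun σ hσ a => by
    by_cases ha : a ∈ s
    · exact hs _ (apply_mem_of_mem_fixingSubgroup_compl hσ ha) _ ha
    · exact congrArg f ((mem_fixingSubgroup_iff _).1 hσ a ha)

variable [DecidableEq α]

theorem swap_mem_fiberPreserving {f : α → β} {a b : α} (h : f a = f b) :
    swap a b ∈ fiberPreserving f := fun c => by
  rcases eq_or_ne c a with rfl | hca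
  · simp [h]
  rcases eq_or_ne c b with rfl | hcb
  · simp [h]
  · rw [swap_apply_of_ne_of_ne hca hcb]

theorem swap_mem_fixingSubgroup_compl {s : Set α} {a b : α} (ha : a ∈ s) (hb : b ∈ s) :
    swap a b ∈ fixingSubgroup (Perm α) sᶜ :=
  (mem_fixingSubgroup_iff _).2 fun _ hc => swap_apply_of_ne_of_ne (fun h => hc (h ▸ ha))
    (fun h => hc (h ▸ hb))

end Equiv.Perm

namespace MonoidAlgebra

open Finset

variable {k G : Type*} [CommRing k]

theorem mem_center_of_forall_commute_of [Monoid G] {z : MonoidAlgebra k G}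
    (h : ∀ g, Commute (of k G g) z) : z ∈ Set.center (MonoidAlgebra k G) := by
  rw [Semigroup.mem_center_iff]
  intro a
  induction a using MonoidAlgebra.induction_on with
  | of g => exact h g
  | add x y hx hy => rw [add_mul, mul_add, hx, hy]
  | smul r x hx => rw [smul_mul_assoc, mul_smul_comm, hx]

theorem sum_of_mul_sum_of [Monoid G] {ι κ : Type*} {s : Finset ι} {t : Finset κ} {u : Finset G}
    {f : ι → G} {g : κ → G}
    (h : Set.BijOn (fun p : ι × κ => f p.1 * g p.2) (s ×ˢ t : Finset (ι × κ)) u) :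
    (∑ i ∈ s, of k G (f i)) * ∑ j ∈ t, of k G (g j) = ∑ x ∈ u, of k G x := by
  rw [sum_mul_sum, ← sum_product']
  exact sum_nbij _ h.mapsTo h.injOn h.surjOn fun p _ => (map_mul (of k G) _ _).symm

theorem of_swap_mul_of_swap {α : Type*} [DecidableEq α] (a b : α) :
    of k (Equiv.Perm α) (Equiv.swap a b) * of k _ (Equiv.swap a b) = 1 := by
  rw [← map_mul, Equiv.swap_mul_self, map_one]

variable [Group G] [Fintype G] (H : Subgroup G) [DecidablePred (· ∈ H)]

theorem of_mul_sum_subgroup_single (χ : G →* ℤˣ) {h : G} (hh : h ∈ H) :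
    of k G h * ∑ g ∈ univ.filter (· ∈ H), single g ((χ g : ℤ) : k) =
      ((χ h : ℤ) : k) • ∑ g ∈ univ.filter (· ∈ H), single g ((χ g : ℤ) : k) := by
  rw [mul_sum, smul_sum]
  refine sum_equiv (Equiv.mulLeft h) (fun g => by simp [H.mul_mem_cancel_left hh]) fun g _ => ?_
  rw [of_apply, single_mul_single, smul_single', one_mul, Equiv.coe_mulLeft, map_mul,
    Units.val_mul, Int.cast_mul, ← mul_assoc, ← Int.cast_mul, ← Units.val_mul,
    Int.units_mul_self, Units.val_one, Int.cast_one, one_mul]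

theorem sum_subgroup_mul_of {h : G} (hh : h ∈ H) :
    (∑ g ∈ univ.filter (· ∈ H), of k G g) * of k G h =
      ∑ g ∈ univ.filter (· ∈ H), of k G g := by
  rw [sum_mul]
  exact sum_equiv (Equiv.mulRight h) (fun g => by simp [H.mul_mem_cancel_right hh])
    fun g _ => (map_mul _ _ _).symm

section Symmetrizer

open Equiv Equiv.Perm

variable (k) {α : Type*} [Fintype α] [DecidableEq α]

open scoped Classical in
noncomputable def setSymmetrizer (s : Finset α) : MonoidAlgebra k (Perm α) :=
  ∑ σ ∈ univ.filter (· ∈ fixingSubgroup (Perm α) (s : Set α)ᶜ), of k (Perm α) σ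

variable {k}

open scoped Classical in
theorem setSymmetrizer_mul_of {s : Finset α} {σ : Perm α}
    (hσ : σ ∈ fixingSubgroup (Perm α) (s : Set α)ᶜ) :
    setSymmetrizer k s * of k _ σ = setSymmetrizer k s :=
  sum_subgroup_mul_of _ hσ

open scoped Classical in
theorem setSymmetrizer_mul_eq_card_smul {s : Finset α} {x : MonoidAlgebra k (Perm α)}
    (h : ∀ σ ∈ fixingSubgroup (Perm α) (s : Set α)ᶜ, of k _ σ * x = x) :
    setSymmetrizer k s * x =
      (univ.filter (· ∈ fixingSubgroup (Perm α) (s : Set α)ᶜ)).card • x := by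
  rw [setSymmetrizer, sum_mul, ← sum_const]
  exact sum_congr rfl fun σ hσ => h σ (mem_filter.1 hσ).2

open scoped Classical in
theorem sum_of_swap_mul_setSymmetrizer {s : Finset α} {a : α} (ha : a ∉ s) :
    (∑ j ∈ insert a s, of k (Perm α) (swap j a)) * setSymmetrizer k s =
      setSymmetrizer k (insert a s) := by
  have hfix : ∀ σ ∈ fixingSubgroup (Perm α) (s : Set α)ᶜ, σ a = a := fun σ hσ =>
    (mem_fixingSubgroup_iff _).1 hσ a (by simpa using ha)
  refine sum_of_mul_sum_of (f := fun j => swap j a) (g := id) ⟨?_, ?_, ?_⟩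
  · rintro ⟨j, σ⟩ hp
    simp only [coe_product, Set.mem_prod, mem_coe, mem_filter, mem_univ, true_and] at hp ⊢
    refine mul_mem (swap_mem_fixingSubgroup_compl (by simpa using hp.1) (by simp)) ?_
    exact fixingSubgroup_antitone _ _ (Set.compl_subset_compl.2 (by simp)) hp.2
  · rintro ⟨j, σ⟩ hp ⟨j', σ'⟩ hp' h
    simp only [coe_product, Set.mem_prod, mem_coe, mem_filter, mem_univ, true_and] at hp hp' h
    have hj : j = j' := by
      simpa [hfix σ hp.2, hfix σ' hp'.2] using congrArg (· a) h
    subst hj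
    simpa using mul_left_cancel h
  · intro τ hτ
    simp only [coe_filter, mem_univ, true_and, Set.mem_ofPred_eq] at hτ
    have hτa : τ a ∈ (↑(insert a s) : Set α) :=
      apply_mem_of_mem_fixingSubgroup_compl hτ (by simp)
    refine ⟨(τ a, swap (τ a) a * τ), ?_, by simp [← mul_assoc]⟩
    simp only [coe_product, Set.mem_prod, mem_coe, mem_filter, mem_univ, true_and]
    refine ⟨hτa, (mem_fixingSubgroup_iff _).2 fun c hc => ?_⟩
    rw [Perm.smul_def, Perm.mul_apply]
    rcases eq_or_ne c a with rfl | hca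
    · exact swap_apply_left _ _
    have hc' : c ∉ (↑(insert a s) : Set α) := by simpa [hca] using hc
    have hτc : τ c = c := (mem_fixingSubgroup_iff _).1 hτ c hc'
    rw [hτc, swap_apply_of_ne_of_ne (fun h => hc' (by rwa [h])) hca]

end Symmetrizer

section AdjacentTranspositions

open Equiv

variable {n : ℕ}

theorem mem_center_of_commute_of_swap_succ {z : MonoidAlgebra k (Perm (Fin n))}
    (h : ∀ x y : Fin n, (x : ℕ) + 1 = y → Commute (of k _ (swap x y)) z) :
    z ∈ Set.center (MonoidAlgebra k (Perm (Fin n))) := by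
  refine mem_center_of_forall_commute_of fun g => ?_
  suffices ⊤ ≤ (Submonoid.centralizer {z}).comap (of k (Perm (Fin n))) from
    ((Submonoid.mem_centralizer_iff.1 (this (Submonoid.mem_top g))) z rfl).symm
  cases n with
  | zero => exact fun g _ => by simp [Subsingleton.elim g 1]
  | succ m =>
    rw [← Perm.mclosure_swap_castSucc_succ m, Submonoid.closure_le]
    rintro _ ⟨i, rfl⟩
    refine Submonoid.mem_centralizer_iff.2 fun _ hz => ?_
    rw [Set.mem_singleton_iff.1 hz]
    exact (h i.castSucc i.succ (by simp)).eq.symm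

end AdjacentTranspositions

end MonoidAlgebra

namespace MvPolynomial

open Equiv

variable (R : Type*) {σ : Type*} [CommRing R]

noncomputable def pairSymmetricSubalgebra (x y : σ) : Subalgebra R (MvPolynomial σ R) :=
  Algebra.adjoin R ({X x + X y, X x * X y} ∪ X '' ({x, y}ᶜ : Set σ))

variable {R} {x y : σ}

theorem X_add_X_mem_pairSymmetricSubalgebra :
    X x + X y ∈ pairSymmetricSubalgebra R x y :=
  Algebra.subset_adjoin (Or.inl (Or.inl rfl))

theorem X_mul_X_mem_pairSymmetricSubalgebra :
    X x * X y ∈ pairSymmetricSubalgebra R x y :=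
  Algebra.subset_adjoin (Or.inl (Or.inr rfl))

theorem X_mem_pairSymmetricSubalgebra {j : σ} (hx : j ≠ x) (hy : j ≠ y) :
    X j ∈ pairSymmetricSubalgebra R x y :=
  Algebra.subset_adjoin (Or.inr ⟨j, by simp [hx, hy], rfl⟩)

theorem exists_eq_add_X_mul (p : MvPolynomial σ R) :
    ∃ q₁ ∈ pairSymmetricSubalgebra R x y, ∃ q₂ ∈ pairSymmetricSubalgebra R x y,
      p = q₁ + X x * q₂ := by
  have hs := X_add_X_mem_pairSymmetricSubalgebra (R := R) (x := x) (y := y)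
  have hm := X_mul_X_mem_pairSymmetricSubalgebra (R := R) (x := x) (y := y)
  induction p using MvPolynomial.induction_on with
  | C a => exact ⟨C a, algebraMap_mem _ a, 0, zero_mem _, by simp⟩
  | add p q hp hq =>
    obtain ⟨p₁, hp₁, p₂, hp₂, rfl⟩ := hp
    obtain ⟨q₁, hq₁, q₂, hq₂, rfl⟩ := hq
    exact ⟨p₁ + q₁, add_mem hp₁ hq₁, p₂ + q₂, add_mem hp₂ hq₂, by ring⟩
  | mul_X p j hp =>
    obtain ⟨q₁, hq₁, q₂, hq₂, rfl⟩ := hp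
    by_cases hjx : j = x
    · subst hjx
      exact ⟨-(X j * X y * q₂), neg_mem (mul_mem hm hq₂), q₁ + (X j + X y) * q₂,
        add_mem hq₁ (mul_mem hs hq₂), by ring⟩
    by_cases hjy : j = y
    · subst hjy
      exact ⟨q₁ * (X x + X j) + X x * X j * q₂, add_mem (mul_mem hq₁ hs) (mul_mem hm hq₂),
        -q₁, neg_mem hq₁, by ring⟩
    have hX := X_mem_pairSymmetricSubalgebra (R := R) hjx hjy
    exact ⟨q₁ * X j, mul_mem hq₁ hX, q₂ * X j, mul_mem hq₂ hX, by ring⟩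

theorem rename_swap_eq_of_mem [DecidableEq σ] {p : MvPolynomial σ R}
    (hp : p ∈ pairSymmetricSubalgebra R x y) :
    rename (swap x y) p = p := by
  suffices pairSymmetricSubalgebra R x y ≤ AlgHom.equalizer (rename (swap x y)) (AlgHom.id R _)
    from this hp
  refine Algebra.adjoin_le ?_
  rintro _ ((rfl | rfl) | ⟨j, hj, rfl⟩)
  · simp [add_comm]
  · simp [mul_comm]
  · simp only [Set.mem_compl_iff, Set.mem_insert_iff, Set.mem_singleton_iff, not_or] at hj
    simp [swap_apply_of_ne_of_ne hj.1 hj.2]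

theorem mem_pairSymmetricSubalgebra_of_rename_swap_eq [DecidableEq σ] [IsDomain R] (hxy : x ≠ y)
    {p : MvPolynomial σ R} (hp : rename (swap x y) p = p) :
    p ∈ pairSymmetricSubalgebra R x y := by
  obtain ⟨q₁, hq₁, q₂, hq₂, rfl⟩ := exists_eq_add_X_mul (x := x) (y := y) p
  have hswapped : q₁ + X x * q₂ = q₁ + X y * q₂ := by
    rw [← hp, map_add, map_mul, rename_swap_eq_of_mem hq₁, rename_swap_eq_of_mem hq₂,
      rename_X, swap_apply_left]
  have hq₂0 : q₂ = 0 := by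
    have hsub : (X x - X y) * q₂ = 0 := by linear_combination hswapped
    refine (mul_eq_zero.1 hsub).resolve_left fun h => hxy ?_
    exact X_injective (sub_eq_zero.1 h)
  simpa [hq₂0] using hq₁

end MvPolynomial

section CommutingFamily

variable {R A ι : Type*} [CommRing R] [Ring A] [Algebra R A] {x : ι → A}

open scoped IsMulCommutative in
noncomputable def MvPolynomial.aevalOfCommute (hx : ∀ i j, Commute (x i) (x j)) :
    MvPolynomial ι R →ₐ[R] A :=
  have := Algebra.isMulCommutative_adjoin R (s := Set.range x) <| by
    rintro _ ⟨i, rfl⟩ _ ⟨j, rfl⟩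
    exact (hx i j).eq
  (Algebra.adjoin R (Set.range x)).val.comp
    (MvPolynomial.aeval fun i => ⟨x i, Algebra.subset_adjoin ⟨i, rfl⟩⟩)

theorem MvPolynomial.aevalOfCommute_X (hx : ∀ i j, Commute (x i) (x j)) (i : ι) :
    aevalOfCommute (R := R) hx (X i) = x i := by
  simp [aevalOfCommute]

theorem FreeAlgebra.lift_eq_aevalOfCommute (hx : ∀ i j, Commute (x i) (x j))
    (P : FreeAlgebra R ι) :
    lift R x P = MvPolynomial.aevalOfCommute (R := R) hx (lift R MvPolynomial.X P) := by
  suffices lift R x = (MvPolynomial.aevalOfCommute (R := R) hx).comp (lift R MvPolynomial.X) from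
    congrArg (· P) this
  ext i
  simp [MvPolynomial.aevalOfCommute_X]

theorem FreeAlgebra.lift_mul_eq_eval_smul {c : ι → R} {v : A} (h : ∀ i, x i * v = c i • v)
    (P : FreeAlgebra R ι) :
    lift R x P * v = MvPolynomial.eval c (lift R MvPolynomial.X P) • v := by
  induction P using FreeAlgebra.induction with
  | grade0 r => simp [Algebra.smul_def]
  | grade1 i => simp [h i]
  | mul p q hp hq =>
    rw [map_mul, mul_assoc, hq, mul_smul_comm, hp, smul_smul, map_mul, map_mul, mul_comm]
  | add p q hp hq => rw [map_add, add_mul, hp, hq, map_add, map_add, add_smul]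

end CommutingFamily

section JucysMurphy

open Finset Equiv Equiv.Perm MonoidAlgebra MvPolynomial
open scoped Classical

variable {n : ℕ}

theorem JM_eq_sum_of (i : Fin n) : JM n i = ∑ j ∈ Iio i, of ℂ _ (swap j i) := by
  simp only [JM, filter_gt_eq_Iio, of_apply]

theorem commute_of_swap_JM {a b i : Fin n} (ha : a ≠ i) (hb : b ≠ i) (hab : a < i ↔ b < i) :
    Commute (of ℂ _ (swap a b)) (JM n i) := by
  rw [JM_eq_sum_of, commute_iff_eq, mul_sum, sum_mul]
  refine sum_equiv (swap a b) (fun j => ?_) fun j _ => ?_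
  · simp only [mem_Iio]
    rcases eq_or_ne j a with rfl | hja
    · rwa [swap_apply_left]
    rcases eq_or_ne j b with rfl | hjb
    · rw [swap_apply_right, hab]
    · rw [swap_apply_of_ne_of_ne hja hjb]
  · rw [← map_mul, ← map_mul, mul_swap_eq_swap_mul, swap_apply_of_ne_of_ne ha.symm hb.symm]

theorem JM_commute (i j : Fin n) : Commute (JM n i) (JM n j) := by
  have key : ∀ i j : Fin n, j < i → Commute (JM n j) (JM n i) := fun i j hji => by
    rw [JM_eq_sum_of j]
    exact Commute.sum_left _ _ _ fun x hx => commute_of_swap_JM ((mem_Iio.1 hx).trans hji).ne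
      hji.ne (iff_of_true ((mem_Iio.1 hx).trans hji) hji)
  rcases lt_trichotomy i j with h | rfl | h
  · exact key j i h
  · exact Commute.refl _
  · exact (key i j h).symm

section Adjacent

variable {x y : Fin n} (hxy : (x : ℕ) + 1 = y)
include hxy

theorem of_swap_mul_JM : of ℂ _ (swap x y) * JM n x = JM n y * of ℂ _ (swap x y) - 1 := by
  have hIio : Iio y = insert x (Iio x) := by
    ext j
    simp only [mem_Iio, mem_insert, Fin.lt_def, Fin.ext_iff]
    omega
  rw [JM_eq_sum_of y, hIio, sum_insert (by simp), add_mul, of_swap_mul_of_swap,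
    add_sub_cancel_left, JM_eq_sum_of, mul_sum, sum_mul]
  refine sum_congr rfl fun j hj => ?_
  have hjx : j ≠ x := (mem_Iio.1 hj).ne
  have hjy : j ≠ y := fun h => by rw [mem_Iio, h, Fin.lt_def] at hj; omega
  rw [← map_mul, ← map_mul, mul_swap_eq_swap_mul, swap_apply_of_ne_of_ne hjx hjy,
    swap_apply_left]

theorem of_swap_mul_JM_succ : of ℂ _ (swap x y) * JM n y = JM n x * of ℂ _ (swap x y) + 1 := by
  have h : JM n y * of ℂ _ (swap x y) = of ℂ _ (swap x y) * JM n x + 1 :=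
    (sub_eq_iff_eq_add.1 (of_swap_mul_JM hxy).symm)
  calc of ℂ _ (swap x y) * JM n y
      = of ℂ _ (swap x y) * (JM n y * of ℂ _ (swap x y)) * of ℂ _ (swap x y) := by
        rw [mul_assoc, mul_assoc, of_swap_mul_of_swap, mul_one]
    _ = _ := by
        rw [h, mul_add, mul_one, ← mul_assoc, of_swap_mul_of_swap, one_mul, add_mul,
          of_swap_mul_of_swap]

theorem commute_of_swap_JM_add : Commute (of ℂ _ (swap x y)) (JM n x + JM n y) := by
  rw [commute_iff_eq, mul_add, add_mul, of_swap_mul_JM hxy, of_swap_mul_JM_succ hxy]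
  abel

theorem commute_of_swap_JM_mul : Commute (of ℂ _ (swap x y)) (JM n x * JM n y) := by
  rw [commute_iff_eq]
  calc of ℂ _ (swap x y) * (JM n x * JM n y)
      = (JM n y * of ℂ _ (swap x y) - 1) * JM n y := by rw [← mul_assoc, of_swap_mul_JM hxy]
    _ = JM n y * (JM n x * of ℂ _ (swap x y) + 1) - JM n y := by
        rw [sub_mul, one_mul, mul_assoc, of_swap_mul_JM_succ hxy]
    _ = _ := by rw [mul_add, mul_one, add_sub_cancel_right, ← mul_assoc, (JM_commute y x).eq]

end Adjacent

theorem aevalOfCommute_JM_mem_center {Q : MvPolynomial (Fin n) ℂ} (hQ : Q.IsSymmetric) :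
    aevalOfCommute JM_commute Q ∈ Set.center (MonoidAlgebra ℂ (Perm (Fin n))) := by
  refine mem_center_of_commute_of_swap_succ fun x y hxy => ?_
  have hxy' : x ≠ y := fun h => by rw [h] at hxy; omega
  have hmem : aevalOfCommute JM_commute Q ∈
      (pairSymmetricSubalgebra ℂ x y).map (aevalOfCommute (R := ℂ) JM_commute) :=
    Subalgebra.mem_map.2 ⟨Q, mem_pairSymmetricSubalgebra_of_rename_swap_eq hxy' (hQ _), rfl⟩
  rw [pairSymmetricSubalgebra, AlgHom.map_adjoin] at hmem
  refine Algebra.commute_of_mem_adjoin_of_forall_mem_commute hmem ?_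
  rintro _ ⟨p, (rfl | rfl) | ⟨j, hj, rfl⟩, rfl⟩
  · simpa [aevalOfCommute_X] using commute_of_swap_JM_add hxy
  · simpa [aevalOfCommute_X] using commute_of_swap_JM_mul hxy
  · simp only [Set.mem_compl_iff, Set.mem_insert_iff, Set.mem_singleton_iff, not_or] at hj
    rw [aevalOfCommute_X]
    refine commute_of_swap_JM (Ne.symm hj.1) (Ne.symm hj.2) ?_
    rw [Fin.lt_def, Fin.lt_def]
    have := Fin.val_ne_of_ne hj.2
    omega

end JucysMurphy

section YoungSymmetrizer

open Finset Equiv Equiv.Perm MonoidAlgebra YoungDiagram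
open scoped Classical

variable {n : ℕ} (μ : YoungDiagram)

noncomputable abbrev rowGroup : Subgroup (Perm (Fin n)) :=
  fiberPreserving fun m : Fin n => rowOf μ m

noncomputable abbrev colGroup : Subgroup (Perm (Fin n)) :=
  fiberPreserving fun m : Fin n => colOf μ m

noncomputable def rowCells (i : ℕ) : Finset (Fin n) := univ.filter fun m => rowOf μ m = i

variable {μ}

theorem rowSym_eq_sum_of :
    rowSym n μ = ∑ g ∈ univ.filter (· ∈ rowGroup μ), of ℂ _ g := by
  simp only [rowSym, of_apply]
  congr

theorem of_mul_rowSym {g : Perm (Fin n)} (hg : g ∈ rowGroup μ) :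
    of ℂ _ g * rowSym n μ = rowSym n μ := by
  have h := of_mul_sum_subgroup_single (k := ℂ) (rowGroup μ) 1 hg
  simp only [MonoidHom.one_apply, Units.val_one, Int.cast_one, one_smul] at h
  convert h using 2 <;> simp only [rowSym] <;> congr

theorem of_swap_mul_colSym {u v : Fin n} (huv : u ≠ v) (h : colOf μ u = colOf μ v) :
    of ℂ _ (swap u v) * colSym n μ = -colSym n μ := by
  have h := of_mul_sum_subgroup_single (k := ℂ) (colGroup μ) sign (swap_mem_fiberPreserving h)
  rw [sign_swap huv, Units.val_neg, Units.val_one, Int.cast_neg, Int.cast_one, neg_one_smul] at h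
  convert h using 2 <;> simp only [colSym] <;> congr

theorem setSymmetrizer_mul_of_mul_colSym (hμ : μ.card = n) {k : Fin n} {i : ℕ}
    (hi : i < rowOf μ k) {g : Perm (Fin n)} (hg : g ∈ rowGroup μ) :
    setSymmetrizer ℂ (insert k (rowCells μ i)) * of ℂ _ g * colSym n μ = 0 := by
  set l := g⁻¹ k
  have hl : rowOf μ l = rowOf μ k := (rowGroup μ).inv_mem hg k
  have hc : colOf μ l < μ.rowLen i :=
    (colOf_lt_rowLen (l.isLt.trans_eq hμ.symm)).trans_le (hl ▸ μ.rowLen_anti _ _ hi.le)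
  set j : Fin n := ⟨μ.rowStart i + colOf μ l, (rowStart_add_lt_card hc).trans_eq hμ⟩
  have hj : rowOf μ j = i := rowOf_rowStart_add hc
  have hjl : j ≠ l := fun h => by rw [← h, hj] at hl; omega
  have hgj : g j ∈ rowCells μ i := by simpa [rowCells, hg j] using hj
  have hconj : swap (g j) k * g = g * swap j l := by
    rw [show k = g l by simp [l], swap_apply_apply, inv_mul_cancel_right]
  have hsym := setSymmetrizer_mul_of (k := ℂ) (s := insert k (rowCells μ i))
    (swap_mem_fixingSubgroup_compl (mem_coe.2 (mem_insert_of_mem hgj))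
      (mem_coe.2 (mem_insert_self _ _)))
  have := IsAddTorsionFree.of_module_rat (M := MonoidAlgebra ℂ (Perm (Fin n)))
  refine self_eq_neg.1 ?_
  calc setSymmetrizer ℂ (insert k (rowCells μ i)) * of ℂ _ g * colSym n μ
      = setSymmetrizer ℂ (insert k (rowCells μ i)) * of ℂ _ (swap (g j) k * g) *
          colSym n μ := by
        rw [map_mul, ← mul_assoc, hsym]
    _ = setSymmetrizer ℂ (insert k (rowCells μ i)) * of ℂ _ g *
          (of ℂ _ (swap j l) * colSym n μ) := by
        rw [hconj, map_mul]; simp only [mul_assoc]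
    _ = _ := by rw [of_swap_mul_colSym hjl (colOf_rowStart_add hc), mul_neg]

theorem setSymmetrizer_rowCells_mul_rowSym (i : ℕ) :
    ∃ N : ℕ, N ≠ 0 ∧
      setSymmetrizer ℂ (rowCells μ i) * rowSym n μ = (N : ℂ) • rowSym n μ := by
  refine ⟨(univ.filter (· ∈ fixingSubgroup (Perm (Fin n))
    ((rowCells μ i : Finset (Fin n)) : Set (Fin n))ᶜ)).card,
    card_ne_zero_of_mem (mem_filter.2 ⟨mem_univ _, one_mem _⟩), ?_⟩
  rw [Nat.cast_smul_eq_nsmul]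
  refine setSymmetrizer_mul_eq_card_smul fun σ hσ => of_mul_rowSym ?_
  refine fixingSubgroup_compl_le_fiberPreserving (fun a ha b hb => ?_) hσ
  simp only [rowCells, coe_filter, mem_univ, true_and, Set.mem_ofPred_eq] at ha hb
  rw [ha, hb]

theorem sum_of_swap_rowCells_mul_youngSym (hμ : μ.card = n) {k : Fin n} {i : ℕ}
    (hi : i < rowOf μ k) :
    (∑ j ∈ rowCells μ i, of ℂ _ (swap j k)) * youngSym n μ = -youngSym n μ := by
  have hk : k ∉ rowCells μ i := by simp only [rowCells, mem_filter]; omega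
  obtain ⟨N, hN, hrow⟩ := setSymmetrizer_rowCells_mul_rowSym (n := n) (μ := μ) i
  have hA : ∑ j ∈ insert k (rowCells μ i), of ℂ _ (swap j k) =
      1 + ∑ j ∈ rowCells μ i, of ℂ _ (swap j k) := by
    rw [sum_insert hk, swap_self, ← Perm.one_def, map_one]
  set A := ∑ j ∈ insert k (rowCells μ i), of ℂ _ (swap j k)
  have hzero : (N : ℂ) • (A * youngSym n μ) = 0 := calc
    _ = A * setSymmetrizer ℂ (rowCells μ i) * rowSym n μ * colSym n μ := by
        rw [mul_assoc _ (setSymmetrizer ℂ _), hrow, youngSym, mul_smul_comm, smul_mul_assoc,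
          mul_assoc]
    _ = ∑ g ∈ univ.filter (· ∈ rowGroup μ),
          setSymmetrizer ℂ (insert k (rowCells μ i)) * of ℂ _ g * colSym n μ := by
        rw [sum_of_swap_mul_setSymmetrizer hk, rowSym_eq_sum_of, mul_sum, sum_mul]
    _ = 0 := sum_eq_zero fun g hg => setSymmetrizer_mul_of_mul_colSym hμ hi (mem_filter.1 hg).2
  rw [smul_eq_zero, or_iff_right (Nat.cast_ne_zero.2 hN), hA, add_mul, one_mul,
    add_eq_zero_iff_neg_eq] at hzero
  exact hzero.symm

theorem sum_of_swap_rowOf_lt_mul_youngSym (hμ : μ.card = n) (k : Fin n) :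
    (∑ j ∈ univ.filter (fun j : Fin n => rowOf μ j < rowOf μ k), of ℂ _ (swap j k)) *
      youngSym n μ = -((rowOf μ k : ℂ) • youngSym n μ) := by
  rw [← sum_fiberwise_of_maps_to (g := fun j : Fin n => rowOf μ j) (t := range (rowOf μ k))
    (by simp), sum_mul]
  calc _ = ∑ i ∈ range (rowOf μ k), -youngSym n μ := sum_congr rfl fun i hi => by
          rw [← sum_of_swap_rowCells_mul_youngSym hμ (mem_range.1 hi), filter_filter]
          congr 2
          ext j
          simp only [rowCells, mem_filter, mem_univ, true_and, and_iff_right_iff_imp]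
          rintro rfl
          exact mem_range.1 hi
    _ = _ := by rw [sum_const, card_range, smul_neg, Nat.cast_smul_eq_nsmul]

theorem card_filter_Iio_rowOf_eq (hμ : μ.card = n) (k : Fin n) :
    ((Iio k).filter fun j : Fin n => rowOf μ j = rowOf μ k).card = colOf μ k := by
  have hcard : ∀ m : Fin n, (m : ℕ) < μ.card := fun m => m.isLt.trans_eq hμ.symm
  have hstart : μ.rowStart (rowOf μ k) ≤ k := rowStart_rowOf_le (hcard k)
  suffices (Iio k).filter (fun j : Fin n => rowOf μ j = rowOf μ k) =
      Ico ⟨μ.rowStart (rowOf μ k), by omega⟩ k by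
    rw [this, Fin.card_Ico]
    rfl
  ext j
  simp only [mem_filter, mem_Iio, mem_Ico, Fin.le_def]
  rw [← le_rowOf_iff (hcard j)]
  constructor
  · exact fun h => ⟨h.2.ge, h.1⟩
  · exact fun h => ⟨h.2, le_antisymm (rowOf_mono h.2.le (hcard k)) h.1⟩

theorem JM_mul_youngSym (hμ : μ.card = n) (k : Fin n) :
    JM n k * youngSym n μ = (contentOf μ k : ℂ) • youngSym n μ := by
  have hcard : ∀ m : Fin n, (m : ℕ) < μ.card := fun m => m.isLt.trans_eq hμ.symm
  have hearlier : (Iio k).filter (fun j : Fin n => ¬ rowOf μ j = rowOf μ k) =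
      univ.filter (fun j : Fin n => rowOf μ j < rowOf μ k) := by
    ext j
    simp only [mem_filter, mem_Iio, mem_univ, true_and]
    constructor
    · exact fun h => lt_of_le_of_ne (rowOf_mono h.1.le (hcard k)) h.2
    · refine fun h => ⟨lt_of_not_ge fun hkj => ?_, h.ne⟩
      exact (rowOf_mono (Fin.le_def.1 hkj) (hcard j)).not_gt h
  have hsame : ∀ j ∈ (Iio k).filter (fun j : Fin n => rowOf μ j = rowOf μ k),
      of ℂ _ (swap j k) * youngSym n μ = youngSym n μ := fun j hj => by
    rw [youngSym, ← mul_assoc, of_mul_rowSym (swap_mem_fiberPreserving (mem_filter.1 hj).2)]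
  rw [JM_eq_sum_of,
    ← sum_filter_add_sum_filter_not (Iio k) (fun j : Fin n => rowOf μ j = rowOf μ k), add_mul,
    hearlier, sum_of_swap_rowOf_lt_mul_youngSym hμ, sum_mul, sum_congr rfl hsame,
    sum_const, card_filter_Iio_rowOf_eq hμ, contentOf, Int.cast_sub, Int.cast_natCast,
    Int.cast_natCast, sub_smul, Nat.cast_smul_eq_nsmul, Nat.cast_smul_eq_nsmul, sub_eq_add_neg]

end YoungSymmetrizer

/-- For any symmetric polynomial `P` in `n` variables (represented by a
noncommutative polynomial whose abelianization is symmetric), the evaluation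
`P(X_1, …, X_n)` at the Jucys–Murphy elements lies in the center of the symmetric group
algebra, and acts on the irreducible representation corresponding to `μ ⊢ n` (realised as
the left ideal generated by the Young symmetrizer of `μ`) as the scalar given by `P`
evaluated at the contents of the boxes of `μ`. -/
theorem jucys_murphy_eval (n : ℕ) (μ : YoungDiagram) (hμ : μ.card = n)
    (P : FreeAlgebra ℂ (Fin n)) (hsym : MvPolynomial.IsSymmetric (abelPoly n P)) :
    FreeAlgebra.lift ℂ (JM n) P ∈ Set.center (MonoidAlgebra ℂ (Equiv.Perm (Fin n))) ∧
    ∀ v ∈ Ideal.span {youngSym n μ},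
      FreeAlgebra.lift ℂ (JM n) P * v =
        MvPolynomial.eval (fun m : Fin n => ((contentOf μ m : ℂ))) (abelPoly n P) • v := by
  have hcenter : FreeAlgebra.lift ℂ (JM n) P ∈ Set.center _ := by
    rw [FreeAlgebra.lift_eq_aevalOfCommute JM_commute]
    exact aevalOfCommute_JM_mem_center hsym
  refine ⟨hcenter, fun v hv => ?_⟩
  obtain ⟨r, rfl⟩ := Submodule.mem_span_singleton.1 hv
  rw [smul_eq_mul, ← mul_assoc, ← Semigroup.mem_center_iff.1 hcenter r, mul_assoc,
    FreeAlgebra.lift_mul_eq_eval_smul (JM_mul_youngSym hμ) P, mul_smul_comm]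
  rfl
end
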